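/- arXiv:1903.00517 — 9 statements merged into one kernel-verified Lean document; each statement's English description precedes it below -/
import Mathlib

section
/- Let γ ∈ (1,2). Then for all x ∈ [0,1], (γ-1)·x ≤ (1+x)^γ - 1 - x^γ ≤ 2γ·x. -/
open Real

theorem sub_one_mul_le_one_add_rpow_sub_one_sub_rpow {γ x : ℝ} (hγ : 1 ≤ γ) (hx0 : 0 ≤ x)
    (hx1 : x ≤ 1) : (γ - 1) * x ≤ (1 + x) ^ γ - 1 - x ^ γ := by
  have bernoulli : 1 + γ * x ≤ (1 + x) ^ γ := one_add_mul_self_le_rpow_one_add (by linarith) hγ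
  have hpow : x ^ γ ≤ x := rpow_le_self_of_le_one hx0 hx1 hγ
  linarith

theorem one_add_rpow_sub_one_sub_rpow_le_two_mul {γ x : ℝ} (hγ0 : 0 ≤ γ) (hγ2 : γ ≤ 2)
    (hx0 : 0 ≤ x) (hx1 : x ≤ 1) : (1 + x) ^ γ - 1 - x ^ γ ≤ 2 * x := by
  have hup : (1 + x) ^ γ ≤ (1 + x) ^ 2 := by
    simpa only [rpow_two] using rpow_le_rpow_of_exponent_le (by linarith) hγ2
  have hlo : x ^ 2 ≤ x ^ γ := by
    simpa only [rpow_two] using rpow_le_rpow_of_exponent_ge' hx0 hx1 hγ0 hγ2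
  nlinarith

theorem stmt0 (γ : ℝ) (h1 : 1 < γ) (h2 : γ < 2) :
    ∀ x ∈ Set.Icc (0:ℝ) 1,
      (γ - 1) * x ≤ (1 + x) ^ γ - 1 - x ^ γ ∧ (1 + x) ^ γ - 1 - x ^ γ ≤ 2 * γ * x := by
  rintro x ⟨hx0, hx1⟩
  refine ⟨sub_one_mul_le_one_add_rpow_sub_one_sub_rpow h1.le hx0 hx1, ?_⟩
  calc (1 + x) ^ γ - 1 - x ^ γ ≤ 2 * x :=
        one_add_rpow_sub_one_sub_rpow_le_two_mul (by linarith) h2.le hx0 hx1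
    _ ≤ 2 * γ * x := by nlinarith
end

section
/- Let γ ∈ (1,2). Then for all x ∈ [0,1], x ≤ 1 + x^γ - (1-x)^γ ≤ (γ+1)·x. -/
/- Both bounds come from comparing the two powers with linear functions on `[0, 1]`:
`0 ≤ t ^ γ ≤ t` since `γ ≥ 1`, and Bernoulli's inequality `1 - γ x ≤ (1 - x) ^ γ`. -/

open Real

lemma self_le_one_add_rpow_sub_rpow_one_sub {γ x : ℝ} (hγ : 1 ≤ γ) (hx₀ : 0 ≤ x) (hx₁ : x ≤ 1) :
    x ≤ 1 + x ^ γ - (1 - x) ^ γ := by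
  have h_pow_nonneg : 0 ≤ x ^ γ := rpow_nonneg hx₀ γ
  have h_pow_le : (1 - x) ^ γ ≤ 1 - x := rpow_le_self_of_le_one (by linarith) (by linarith) hγ
  linarith

lemma one_add_rpow_sub_rpow_one_sub_le {γ x : ℝ} (hγ : 1 ≤ γ) (hx₀ : 0 ≤ x) (hx₁ : x ≤ 1) :
    1 + x ^ γ - (1 - x) ^ γ ≤ (γ + 1) * x := by
  have h_pow_le : x ^ γ ≤ x := rpow_le_self_of_le_one hx₀ hx₁ hγ
  have h_bernoulli : 1 + γ * -x ≤ (1 + -x) ^ γ :=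
    one_add_mul_self_le_rpow_one_add (by linarith) hγ
  rw [← sub_eq_add_neg] at h_bernoulli
  linarith

theorem stmt2_general (γ : ℝ) (h1 : 1 < γ) :
    ∀ x ∈ Set.Icc (0:ℝ) 1,
      x ≤ 1 + x ^ γ - (1 - x) ^ γ ∧ 1 + x ^ γ - (1 - x) ^ γ ≤ (γ + 1) * x := by
  rintro x ⟨hx₀, hx₁⟩
  exact ⟨self_le_one_add_rpow_sub_rpow_one_sub h1.le hx₀ hx₁,
    one_add_rpow_sub_rpow_one_sub_le h1.le hx₀ hx₁⟩

theorem stmt2 (γ : ℝ) (h1 : 1 < γ) (h2 : γ < 2) :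
    ∀ x ∈ Set.Icc (0:ℝ) 1,
      x ≤ 1 + x ^ γ - (1 - x) ^ γ ∧ 1 + x ^ γ - (1 - x) ^ γ ≤ (γ + 1) * x :=
  stmt2_general γ h1
end

section
/- Let k : ℤ → [0,∞) be symmetric (k(-j)=k(j)), summable, with k(0)=0, and with support of cardinality 2N for some N ∈ ℕ. Then for every function u : ℤ → ℝ, Γ₂(u)(0) ≥ (1/(2N))·(ℒu(0))², where ℒu(0) = ∑_{j∈ℤ} k(j)(u(j)-u(0)), Γ₂(u)(0) = (1/4)·∑_{j,l∈ℤ} k(j)k(l)·(u(j+l)-u(j)-u(l)+u(0))². -/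
open scoped ENNReal

/-- Non-local operator at 0: `ℒu(0) = ∑_{j∈ℤ} k(j) (u(j)-u(0))`. -/
noncomputable def Lop (k u : ℤ → ℝ) : ℝ := ∑' j : ℤ, k j * (u j - u 0)

/-- Carré du champ at 0. -/
noncomputable def Gamma (k u : ℤ → ℝ) : ℝ := (1/2) * ∑' j : ℤ, k j * (u j - u 0)^2

/-- Iterated carré du champ at 0 (real-valued). -/
noncomputable def Gamma2 (k u : ℤ → ℝ) : ℝ :=
  (1/4) * ∑' p : ℤ × ℤ, k p.1 * k p.2 * (u (p.1 + p.2) - u p.1 - u p.2 + u 0)^2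

/-- Iterated carré du champ at 0, valued in `ℝ≥0∞`. -/
noncomputable def Gamma2e (k u : ℤ → ℝ) : ℝ≥0∞ :=
  (1/4) * ∑' p : ℤ × ℤ, ENNReal.ofReal (k p.1 * k p.2 * (u (p.1 + p.2) - u p.1 - u p.2 + u 0)^2)


/-!
Pairing each jump `j` with `-j` (symmetry of `k`) gives
`2 ℒu(0) = ∑ⱼ k(j) (u(j) + u(-j) - 2u(0))`. The summands with `l = -j` of `4 Γ₂(u)(0)` are
exactly `(k(j) (u(j) + u(-j) - 2u(0)))²`, and all other summands are nonnegative, so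
Cauchy–Schwarz over the `2N` points of the support of `k` gives `(2 ℒu(0))² ≤ 2N · 4 Γ₂(u)(0)`.
-/

open Function Finset

theorem sq_tsum_le_card_mul_tsum_sq {α : Type*} {a : α → ℝ} {s : Finset α}
    (hs : support a ⊆ s) : (∑' i, a i) ^ 2 ≤ #s * ∑' i, a i ^ 2 := by
  have hs_sq : support (fun i => a i ^ 2) ⊆ s := fun i hi => hs (by simpa using hi)
  rw [tsum_eq_sum' hs, tsum_eq_sum' hs_sq]
  exact sq_sum_le_card_mul_sum_sq

section

variable {k : ℤ → ℝ} (u : ℤ → ℝ)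

theorem Gamma2_nonneg (hpos : ∀ j, 0 ≤ k j) : 0 ≤ Gamma2 k u :=
  mul_nonneg (by norm_num) <| tsum_nonneg fun p => by
    have := hpos p.1; have := hpos p.2; positivity

theorem Lop_eq_tsum_neg (hsym : ∀ j, k (-j) = k j) :
    Lop k u = ∑' j, k j * (u (-j) - u 0) := by
  rw [Lop, ← (Equiv.neg ℤ).tsum_eq]
  simp only [Equiv.neg_apply, hsym]

theorem two_mul_Lop_eq_tsum (hsym : ∀ j, k (-j) = k j) (hfin : (support k).Finite) :
    2 * Lop k u = ∑' j, k j * (u j + u (-j) - 2 * u 0) := by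
  have hsum (v : ℤ → ℝ) : Summable fun j => k j * v j :=
    summable_of_hasFiniteSupport (hfin.subset (support_mul_subset_left _ _))
  rw [two_mul]
  nth_rw 2 [Lop_eq_tsum_neg u hsym]
  rw [Lop, ← (hsum fun j => u j - u 0).tsum_add (hsum fun j => u (-j) - u 0)]
  congr 1 with j
  ring

theorem tsum_sq_le_four_mul_Gamma2 (hpos : ∀ j, 0 ≤ k j) (hsym : ∀ j, k (-j) = k j)
    (hfin : (support k).Finite) :
    ∑' j, (k j * (u j + u (-j) - 2 * u 0)) ^ 2 ≤ 4 * Gamma2 k u := by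
  set g : ℤ × ℤ → ℝ := fun p => k p.1 * k p.2 * (u (p.1 + p.2) - u p.1 - u p.2 + u 0) ^ 2
  have hg_nonneg (p : ℤ × ℤ) : 0 ≤ g p := by
    have := hpos p.1; have := hpos p.2; positivity
  have hg_summable : Summable g := by
    refine summable_of_hasFiniteSupport ((hfin.prod hfin).subset fun p hp => ?_)
    simp only [g, mem_support, mul_ne_zero_iff] at hp
    exact ⟨hp.1.1, hp.1.2⟩
  have hdiag : Injective fun j : ℤ => (j, -j) := fun i j h => (Prod.ext_iff.1 h).1
  have hGamma2 : 4 * Gamma2 k u = ∑' p, g p := by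
    rw [Gamma2, ← mul_assoc, show (4 : ℝ) * (1 / 4) = 1 by norm_num, one_mul]
  rw [hGamma2]
  convert tsum_comp_le_tsum_of_inj hg_summable hg_nonneg hdiag using 1
  congr 1 with j
  simp only [g, comp_apply, hsym, add_neg_cancel]
  ring

theorem sq_Lop_le_card_mul_Gamma2 (hpos : ∀ j, 0 ≤ k j) (hsym : ∀ j, k (-j) = k j)
    (hfin : (support k).Finite) : Lop k u ^ 2 ≤ #hfin.toFinset * Gamma2 k u := by
  have hsupp : support (fun j => k j * (u j + u (-j) - 2 * u 0)) ⊆ hfin.toFinset := by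
    simpa only [Set.Finite.coe_toFinset] using support_mul_subset_left _ _
  calc Lop k u ^ 2 = (2 * Lop k u) ^ 2 / 4 := by ring
    _ ≤ #hfin.toFinset * (4 * Gamma2 k u) / 4 := by
        rw [two_mul_Lop_eq_tsum u hsym hfin]
        gcongr
        exact (sq_tsum_le_card_mul_tsum_sq hsupp).trans
          (by gcongr; exact tsum_sq_le_four_mul_Gamma2 u hpos hsym hfin)
    _ = #hfin.toFinset * Gamma2 k u := by ring

end

theorem stmt7_general (k : ℤ → ℝ) (hpos : ∀ j, 0 ≤ k j) (hsym : ∀ j, k (-j) = k j)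
    (hfin : (Function.support k).Finite) (N : ℕ)
    (hcard : hfin.toFinset.card = 2 * N) (u : ℤ → ℝ) :
    (1 / (2 * (N : ℝ))) * (Lop k u) ^ 2 ≤ Gamma2 k u := by
  have h := sq_Lop_le_card_mul_Gamma2 u hpos hsym hfin
  rw [hcard, Nat.cast_mul, Nat.cast_ofNat, mul_comm] at h
  rw [one_div_mul_eq_div]
  exact div_le_of_le_mul₀ (by positivity) (Gamma2_nonneg u hpos) h

theorem stmt7 (k : ℤ → ℝ) (hpos : ∀ j, 0 ≤ k j) (hsym : ∀ j, k (-j) = k j)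
    (h0 : k 0 = 0) (hsum : Summable k)
    (hfin : (Function.support k).Finite) (N : ℕ) (hN : 0 < N)
    (hcard : hfin.toFinset.card = 2 * N) (u : ℤ → ℝ) :
    (1 / (2 * (N : ℝ))) * (Lop k u) ^ 2 ≤ Gamma2 k u :=
  stmt7_general k hpos hsym hfin N hcard u
end

section
/- Let k : ℤ → [0,∞) be symmetric, summable, k(0)=0, |k|₁ > 0. Suppose that for some κ ≥ 0 and finite d > 0 the inequality Γ₂(u)(0) ≥ κ·Γ(u)(0) + (1/d)·(ℒu(0))² holds for some class of admissible functions u with u(0)=0. Then for all such u, Γ₂(u)(0) ≥ (1/d̃)·(ℒu(0))² with d̃ = 2d|k|₁/(dκ + 2|k|₁). -/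
open scoped ENNReal

/-!
By Cauchy–Schwarz for the weights `k`, `(ℒu)² ≤ |k|₁ · ∑ k(j) u(j)² = 2 |k|₁ Γ(u)`, so the curvature term
`κ Γ(u)` is at least `κ/(2|k|₁) · (ℒu)²`. Adding this to `(1/d)(ℒu)²` gives the coefficient
`κ/(2|k|₁) + 1/d = 1/d̃`.
-/

section WeightedCauchySchwarz

variable {ι : Type*} {k v : ι → ℝ}

theorem Summable.mul_of_summable_mul_sq (hpos : ∀ j, 0 ≤ k j) (hk : Summable k)
    (hv : Summable fun j => k j * v j ^ 2) : Summable fun j => k j * v j := by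
  refine Summable.of_norm_bounded ((hk.add hv).div_const 2) fun j => ?_
  rw [Real.norm_eq_abs, abs_mul, abs_of_nonneg (hpos j)]
  -- `|v| ≤ (1 + v²)/2`
  nlinarith [sq_nonneg (|v j| - 1), sq_abs (v j), hpos j]

theorem sq_tsum_mul_le_tsum_mul_tsum_mul_sq (hpos : ∀ j, 0 ≤ k j) (hk : Summable k)
    (hv : Summable fun j => k j * v j ^ 2) :
    (∑' j, k j * v j) ^ 2 ≤ (∑' j, k j) * ∑' j, k j * v j ^ 2 := by
  have hkv2_nonneg : ∀ j, 0 ≤ k j * v j ^ 2 := fun j => mul_nonneg (hpos j) (sq_nonneg _)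
  have h_partial (s : Finset ι) :
      (∑ j ∈ s, k j * v j) ^ 2 ≤ (∑' j, k j) * ∑' j, k j * v j ^ 2 :=
    calc (∑ j ∈ s, k j * v j) ^ 2 ≤ (∑ j ∈ s, k j) * ∑ j ∈ s, k j * v j ^ 2 :=
          Finset.sum_sq_le_sum_mul_sum_of_sq_le_mul s (fun j _ => hpos j)
            (fun j _ => hkv2_nonneg j) (fun j _ => le_of_eq (by ring))
      _ ≤ (∑' j, k j) * ∑' j, k j * v j ^ 2 :=
          mul_le_mul (hk.sum_le_tsum s fun j _ => hpos j)
            (hv.sum_le_tsum s fun j _ => hkv2_nonneg j)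
            (Finset.sum_nonneg fun j _ => hkv2_nonneg j) (tsum_nonneg hpos)
  exact le_of_tendsto' ((hk.mul_of_summable_mul_sq hpos hv).hasSum.pow 2) h_partial

end WeightedCauchySchwarz

theorem sq_Lop_le_mul_Gamma {k u : ℤ → ℝ} (hpos : ∀ j, 0 ≤ k j) (hk : Summable k)
    (hu : Summable fun j => k j * (u j - u 0) ^ 2) :
    Lop k u ^ 2 ≤ 2 * (∑' j, k j) * Gamma k u := by
  have := sq_tsum_mul_le_tsum_mul_tsum_mul_sq hpos hk hu
  rw [Lop, Gamma]
  linarith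

theorem stmt9_general (k : ℤ → ℝ) (hpos : ∀ j, 0 ≤ k j)
    (hsum : Summable k) (hk1 : 0 < ∑' j : ℤ, k j)
    (κ d : ℝ) (hκ : 0 ≤ κ) (hd : 0 < d)
    (A : (ℤ → ℝ) → Prop)
    (hCD : ∀ u : ℤ → ℝ, A u → u 0 = 0 → Summable (fun j : ℤ => k j * (u j) ^ 2) →
      κ * Gamma k u + (1 / d) * (Lop k u) ^ 2 ≤ Gamma2 k u) :
    ∀ u : ℤ → ℝ, A u → u 0 = 0 → Summable (fun j : ℤ => k j * (u j) ^ 2) →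
      (1 / (2 * d * (∑' j : ℤ, k j) / (d * κ + 2 * (∑' j : ℤ, k j)))) * (Lop k u) ^ 2
        ≤ Gamma2 k u := by
  intro u hA hu0 hu
  set K := ∑' j : ℤ, k j
  have hCS : Lop k u ^ 2 ≤ 2 * K * Gamma k u :=
    sq_Lop_le_mul_Gamma hpos hsum (by simpa only [hu0, sub_zero] using hu)
  have hcoeff : 1 / (2 * d * K / (d * κ + 2 * K)) = κ / (2 * K) + 1 / d := by
    field_simp
  have hcurv : κ / (2 * K) * Lop k u ^ 2 ≤ κ * Gamma k u := by
    rw [div_mul_eq_mul_div, div_le_iff₀ (by positivity)]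
    linarith [mul_le_mul_of_nonneg_left hCS hκ]
  rw [hcoeff]
  linarith [hCD u hA hu0 hu]

theorem stmt9 (k : ℤ → ℝ) (hpos : ∀ j, 0 ≤ k j) (hsym : ∀ j, k (-j) = k j)
    (h0 : k 0 = 0) (hsum : Summable k) (hk1 : 0 < ∑' j : ℤ, k j)
    (κ d : ℝ) (hκ : 0 ≤ κ) (hd : 0 < d)
    (A : (ℤ → ℝ) → Prop)
    (hCD : ∀ u : ℤ → ℝ, A u → u 0 = 0 → Summable (fun j : ℤ => k j * (u j) ^ 2) →
      κ * Gamma k u + (1 / d) * (Lop k u) ^ 2 ≤ Gamma2 k u) :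
    ∀ u : ℤ → ℝ, A u → u 0 = 0 → Summable (fun j : ℤ => k j * (u j) ^ 2) →
      (1 / (2 * d * (∑' j : ℤ, k j) / (d * κ + 2 * (∑' j : ℤ, k j)))) * (Lop k u) ^ 2
        ≤ Gamma2 k u :=
  stmt9_general k hpos hsum hk1 κ d hκ hd A hCD
end

section
/- Let k : ℤ → [0,∞) be symmetric, summable, k(0)=0. For any u with the relevant sums finite, Γ₂(u)(0) = (1/4)·∑_{j,l∈ℤ} k(l)k(j)·(u(j+l)-2u(j)+u(0))² − |k|₁·Γ(u)(0) + (1/2)·(ℒu(0))². In particular, Γ₂(u)(0) ≥ −|k|₁·Γ(u)(0) + (1/2)·(ℒu(0))², i.e. CD(−|k|₁, 2) holds. -/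
/-!
With `A = u(j+l) - 2u(j) + u(0)` and `B = u(j+l) - 2u(l) + u(0)`, the mixed difference
`u(j+l) - u(j) - u(l) + u(0)` is `(A + B)/2` and `A - B = 2((u(l) - u(0)) - (u(j) - u(0)))`.
The parallelogram law `((A + B)/2)² = (A² + B²)/2 - ((A - B)/2)²` therefore splits the summand
of `Γ₂` into second differences, whose two halves have equal sums after exchanging `j` and `l`, and a
square of first differences, whose double sum factors as `2|k|₁ ∑ k(j)(u(j)-u(0))² - 2(ℒu(0))²`.
-/

open scoped ENNReal

theorem hasSum_mul_of_summable_norm {ι κ R : Type*} [NormedRing R] [CompleteSpace R]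
    {f : ι → R} {g : κ → R}
    (hf : Summable fun i => ‖f i‖) (hg : Summable fun j => ‖g j‖) :
    HasSum (fun p : ι × κ => f p.1 * g p.2) ((∑' i, f i) * ∑' j, g j) :=
  hf.of_norm.hasSum.mul hg.of_norm.hasSum (summable_mul_of_summable_norm hf hg)

section
variable {G : Type*} [AddCommMonoid G] (k u : G → ℝ)

theorem summable_secondDifference_swap
    (hB : Summable fun p : G × G => k p.1 * k p.2 * (u (p.1 + p.2) - 2 * u p.1 + u 0) ^ 2) :
    Summable fun p : G × G => k p.1 * k p.2 * (u (p.1 + p.2) - 2 * u p.2 + u 0) ^ 2 :=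
  hB.prod_symm.congr fun p => by simp only [Prod.fst_swap, Prod.snd_swap, add_comm, mul_comm]

theorem tsum_secondDifference_swap :
    ∑' p : G × G, k p.1 * k p.2 * (u (p.1 + p.2) - 2 * u p.2 + u 0) ^ 2 =
      ∑' p : G × G, k p.1 * k p.2 * (u (p.1 + p.2) - 2 * u p.1 + u 0) ^ 2 := by
  rw [← (Equiv.prodComm G G).tsum_eq]
  simp only [Equiv.prodComm_apply, Prod.fst_swap, Prod.snd_swap, add_comm, mul_comm]

theorem tsum_mixedDifference_eq (hk : Summable fun j => ‖k j‖)
    (hΓ : Summable fun j => ‖k j * (u j - u 0) ^ 2‖)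
    (hL : Summable fun j => ‖k j * (u j - u 0)‖)
    (hB : Summable fun p : G × G => k p.1 * k p.2 * (u (p.1 + p.2) - 2 * u p.1 + u 0) ^ 2) :
    ∑' p : G × G, k p.1 * k p.2 * (u (p.1 + p.2) - u p.1 - u p.2 + u 0) ^ 2 =
      ∑' p : G × G, k p.1 * k p.2 * (u (p.1 + p.2) - 2 * u p.1 + u 0) ^ 2
        - 2 * (∑' j, k j) * (∑' j, k j * (u j - u 0) ^ 2)
        + 2 * (∑' j, k j * (u j - u 0)) ^ 2 := by
  have h := ((((hB.hasSum.add (summable_secondDifference_swap k u hB).hasSum).div_const 2).sub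
    (hasSum_mul_of_summable_norm hΓ hk)).sub (hasSum_mul_of_summable_norm hk hΓ)).add
    ((hasSum_mul_of_summable_norm hL hL).mul_left 2)
  rw [(h.congr_fun fun p => by ring).tsum_eq, tsum_secondDifference_swap]
  ring

end

theorem stmt11_general (k : ℤ → ℝ) (hpos : ∀ j, 0 ≤ k j) (hsum : Summable k) (u : ℤ → ℝ)
    (h2 : Summable (fun p : ℤ × ℤ =>
      k p.1 * k p.2 * (u (p.1 + p.2) - 2 * u p.1 + u 0) ^ 2))
    (h3 : Summable (fun j : ℤ => k j * (u j - u 0) ^ 2))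
    (h4 : Summable (fun j : ℤ => k j * |u j - u 0|)) :
    Gamma2 k u =
      (1/4) * (∑' p : ℤ × ℤ, k p.1 * k p.2 * (u (p.1 + p.2) - 2 * u p.1 + u 0) ^ 2)
        - (∑' j : ℤ, k j) * Gamma k u + (1/2) * (Lop k u) ^ 2
    ∧ -(∑' j : ℤ, k j) * Gamma k u + (1/2) * (Lop k u) ^ 2 ≤ Gamma2 k u := by
  have hk : Summable fun j => ‖k j‖ := by
    simpa only [Real.norm_of_nonneg (hpos _)] using hsum
  have hΓ : Summable fun j => ‖k j * (u j - u 0) ^ 2‖ := by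
    simpa only [Real.norm_of_nonneg (mul_nonneg (hpos _) (sq_nonneg _))] using h3
  have hL : Summable fun j => ‖k j * (u j - u 0)‖ := by
    simpa only [Real.norm_eq_abs, abs_mul, abs_of_nonneg (hpos _)] using h4
  have hB_nonneg : 0 ≤ ∑' p : ℤ × ℤ, k p.1 * k p.2 * (u (p.1 + p.2) - 2 * u p.1 + u 0) ^ 2 :=
    tsum_nonneg fun p => mul_nonneg (mul_nonneg (hpos _) (hpos _)) (sq_nonneg _)
  have hΓ₂ : Gamma2 k u =
      (1/4) * (∑' p : ℤ × ℤ, k p.1 * k p.2 * (u (p.1 + p.2) - 2 * u p.1 + u 0) ^ 2)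
        - (∑' j : ℤ, k j) * Gamma k u + (1/2) * (Lop k u) ^ 2 := by
    rw [Gamma2, Gamma, Lop, tsum_mixedDifference_eq k u hk hΓ hL h2]
    ring
  exact ⟨hΓ₂, by linarith⟩

theorem stmt11 (k : ℤ → ℝ) (hpos : ∀ j, 0 ≤ k j) (hsym : ∀ j, k (-j) = k j)
    (h0 : k 0 = 0) (hsum : Summable k) (u : ℤ → ℝ)
    (h1 : Summable (fun p : ℤ × ℤ =>
      k p.1 * k p.2 * (u (p.1 + p.2) - u p.1 - u p.2 + u 0) ^ 2))
    (h2 : Summable (fun p : ℤ × ℤ =>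
      k p.1 * k p.2 * (u (p.1 + p.2) - 2 * u p.1 + u 0) ^ 2))
    (h3 : Summable (fun j : ℤ => k j * (u j - u 0) ^ 2))
    (h4 : Summable (fun j : ℤ => k j * |u j - u 0|)) :
    Gamma2 k u =
      (1/4) * (∑' p : ℤ × ℤ, k p.1 * k p.2 * (u (p.1 + p.2) - 2 * u p.1 + u 0) ^ 2)
        - (∑' j : ℤ, k j) * Gamma k u + (1/2) * (Lop k u) ^ 2
    ∧ -(∑' j : ℤ, k j) * Gamma k u + (1/2) * (Lop k u) ^ 2 ≤ Gamma2 k u :=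
  stmt11_general k hpos hsum u h2 h3 h4
end

section
/- Let k : ℤ → [0,∞) be symmetric, summable, k(0)=0 with finite second moment ∑_{j∈ℕ} j²·k(j) < ∞. For u(j) = j² one has Γ₂(u)(0) = (ℒu(0))². Consequently, if CD(0,d) holds for all admissible u at 0, then d ≥ 1. -/
/-!
For `u j = j²` the second difference `u (j + l) - u j - u l + u 0` equals `2 j l`, so the double
series defining `Γ₂(u)(0)` factors as `(∑ k j · j²)²`, which is `(ℒu(0))²`. Testing `CD(0, d)` on
this `u` gives `S² / d ≤ S²` with `S = ∑ k j · j² > 0`, hence `d ≥ 1`.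
-/

open scoped ENNReal

noncomputable def secondMoment (k : ℤ → ℝ) : ℝ := ∑' j : ℤ, k j * (j : ℝ) ^ 2

lemma summable_mul_sq_of_even {k : ℤ → ℝ} (hsym : ∀ j, k (-j) = k j)
    (hM2 : Summable fun j : ℕ => k (j : ℤ) * (j : ℝ) ^ 2) :
    Summable fun j : ℤ => k j * (j : ℝ) ^ 2 :=
  Summable.of_nat_of_neg hM2 (by simpa [hsym] using hM2)

lemma Lop_sq (k : ℤ → ℝ) : Lop k (fun j : ℤ => (j : ℝ) ^ 2) = secondMoment k := by
  simp [Lop, secondMoment]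

lemma Gamma2_sq {k : ℤ → ℝ} (hk : Summable fun j : ℤ => k j * (j : ℝ) ^ 2) :
    Gamma2 k (fun j : ℤ => (j : ℝ) ^ 2) = secondMoment k ^ 2 := by
  have hsecond (p : ℤ × ℤ) : k p.1 * k p.2 *
      (((p.1 + p.2 : ℤ) : ℝ) ^ 2 - (p.1 : ℝ) ^ 2 - (p.2 : ℝ) ^ 2 + ((0 : ℤ) : ℝ) ^ 2) ^ 2
      = 4 * (k p.1 * (p.1 : ℝ) ^ 2 * (k p.2 * (p.2 : ℝ) ^ 2)) := by
    push_cast; ring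
  rw [Gamma2, tsum_congr hsecond, tsum_mul_left,
    ← tsum_mul_tsum_of_summable_norm hk.norm hk.norm, secondMoment]
  ring

lemma secondMoment_pos {k : ℤ → ℝ} (hpos : ∀ j, 0 ≤ k j) (h0 : k 0 = 0)
    (hk1 : 0 < ∑' j : ℤ, k j) (hk : Summable fun j : ℤ => k j * (j : ℝ) ^ 2) :
    0 < secondMoment k := by
  obtain ⟨j, hj⟩ : ∃ j, k j ≠ 0 := by
    by_contra! h
    simp [h] at hk1
  have hj0 : j ≠ 0 := by rintro rfl; exact hj h0
  have hjsq : (0 : ℝ) < (j : ℝ) ^ 2 := by positivity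
  exact hk.tsum_pos (fun i => mul_nonneg (hpos i) (sq_nonneg _)) j
    (mul_pos ((hpos j).lt_of_ne' hj) hjsq)

theorem stmt13_general (k : ℤ → ℝ) (hpos : ∀ j, 0 ≤ k j) (hsym : ∀ j, k (-j) = k j)
    (h0 : k 0 = 0) (hk1 : 0 < ∑' j : ℤ, k j)
    (hM2 : Summable (fun j : ℕ => k (j : ℤ) * (j : ℝ) ^ 2)) :
    Gamma2 k (fun j : ℤ => (j : ℝ) ^ 2) = (Lop k (fun j : ℤ => (j : ℝ) ^ 2)) ^ 2
    ∧ ∀ d : ℝ, 0 < d →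
        (∀ u : ℤ → ℝ, Summable (fun j : ℤ => k j * |u j - u 0|) →
          (1 / d) * (Lop k u) ^ 2 ≤ Gamma2 k u) →
        1 ≤ d := by
  have hk := summable_mul_sq_of_even hsym hM2
  have hGamma2 := Gamma2_sq hk
  refine ⟨by rw [hGamma2, Lop_sq], fun d hd hCD => ?_⟩
  have hCD_sq := hCD (fun j : ℤ => (j : ℝ) ^ 2) (by simpa using hk)
  rw [hGamma2, Lop_sq] at hCD_sq
  have hS := pow_pos (secondMoment_pos hpos h0 hk1 hk) 2
  have : 1 / d ≤ 1 := le_of_mul_le_mul_right (by simpa using hCD_sq) hS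
  rwa [div_le_one hd] at this

theorem stmt13 (k : ℤ → ℝ) (hpos : ∀ j, 0 ≤ k j) (hsym : ∀ j, k (-j) = k j)
    (h0 : k 0 = 0) (hsum : Summable k) (hk1 : 0 < ∑' j : ℤ, k j)
    (hM2 : Summable (fun j : ℕ => k (j : ℤ) * (j : ℝ) ^ 2)) :
    Gamma2 k (fun j : ℤ => (j : ℝ) ^ 2) = (Lop k (fun j : ℤ => (j : ℝ) ^ 2)) ^ 2
    ∧ ∀ d : ℝ, 0 < d →
        (∀ u : ℤ → ℝ, Summable (fun j : ℤ => k j * |u j - u 0|) →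
          (1 / d) * (Lop k u) ^ 2 ≤ Gamma2 k u) →
        1 ≤ d :=
  stmt13_general k hpos hsym h0 hk1 hM2
end

section
/- Let k : ℤ → [0,∞) be symmetric, summable, k(0)=0, with support S = {±2^l : l ∈ ℕ₀} and satisfying ∑_{l∈S₊} (k(2l)/k(l))² < ∞ where S₊ = S ∩ ℕ. Then there exists a finite d > 0 such that Γ₂(u)(0) ≥ (1/d)·(ℒu(0))² for all admissible u, i.e. CD(0,d) holds at 0. -/
open scoped ENNReal

/-! Put `x_l = k(2^l) (u(2^l) + u(-2^l) - 2u(0))`, so that `ℒu(0) = ∑ x_l` and `x_l²` is the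
`Γ₂` term at `(2^l, -2^l)`. Together with the diagonal terms at `(±2^l, ±2^l)` these control the
doubled differences `z_l = k(2^l) (u(2^{l+1}) + u(-2^{l+1}) - 2u(0))` in `ℓ²`. Since
`x_{l+1} = (k(2^{l+1}) / k(2^l)) z_l`, Cauchy–Schwarz against the square-summable ratios bounds
`(∑ x_l)²` by `2 (x_0² + R ∑ z_l²)`, a fixed multiple of `Γ₂(u)(0)`. -/

open Function

lemma summable_mul_of_summable_sq {ι : Type*} {f g : ι → ℝ} (hf : Summable fun i => f i ^ 2)
    (hg : Summable fun i => g i ^ 2) : Summable fun i => f i * g i :=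
  Summable.of_norm_bounded ((hf.add hg).mul_left (1 / 2)) fun i => by
    rw [Real.norm_eq_abs, abs_mul]
    nlinarith [sq_abs (f i), sq_abs (g i), sq_nonneg (|f i| - |g i|)]

lemma sq_tsum_mul_le {ι : Type*} {f g : ι → ℝ} (hf : Summable fun i => f i ^ 2)
    (hg : Summable fun i => g i ^ 2) :
    (∑' i, f i * g i) ^ 2 ≤ (∑' i, f i ^ 2) * ∑' i, g i ^ 2 :=
  le_of_tendsto ((summable_mul_of_summable_sq hf hg).hasSum.pow 2) <|
    Filter.Eventually.of_forall fun s =>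
      (Finset.sum_mul_sq_le_sq_mul_sq s f g).trans <|
        mul_le_mul (hf.sum_le_tsum s fun _ _ => sq_nonneg _)
          (hg.sum_le_tsum s fun _ _ => sq_nonneg _)
          (Finset.sum_nonneg fun _ _ => sq_nonneg _) (tsum_nonneg fun _ => sq_nonneg _)

lemma sq_tsum_le_of_succ_eq_mul {x r z : ℕ → ℝ} (hr : Summable fun l => r l ^ 2)
    (hz : Summable fun l => z l ^ 2) (hx : ∀ l, x (l + 1) = r l * z l) :
    (∑' l, x l) ^ 2 ≤ 2 * (x 0 ^ 2 + (∑' l, r l ^ 2) * ∑' l, z l ^ 2) := by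
  have hrz := summable_mul_of_summable_sq hr hz
  have hsum : ∑' l, x l = x 0 + ∑' l, r l * z l := by
    rw [((summable_nat_add_iff 1).mp (hrz.congr fun l => (hx l).symm)).tsum_eq_zero_add]
    simp only [hx]
  rw [hsum]
  nlinarith [sq_tsum_mul_le hr hz, sq_nonneg (x 0 - ∑' l, r l * z l)]

lemma summable_and_tsum_le_toReal {ι : Type*} {q : ι → ℝ} (hq : ∀ i, 0 ≤ q i) {c : ℝ≥0∞}
    (hc : c ≠ ⊤) (h : ∑' i, ENNReal.ofReal (q i) ≤ c) : Summable q ∧ ∑' i, q i ≤ c.toReal := by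
  have hs : Summable q := by
    simpa only [ENNReal.toReal_ofReal (hq _)] using
      ENNReal.summable_toReal (ne_top_of_le_ne_top hc h)
  refine ⟨hs, ?_⟩
  rw [← ENNReal.ofReal_le_iff_le_toReal hc, ENNReal.ofReal_tsum_of_nonneg hq hs]
  exact h

lemma injective_two_pow : Injective fun l : ℕ => (2 : ℤ) ^ l :=
  pow_right_injective₀ two_pos (by norm_num)

lemma tsum_int_eq_tsum_nat_of_support_subset {E : Type*} [NormedAddCommGroup E] [CompleteSpace E]
    {f : ℤ → E} (hf : Summable f)
    (hsupp : support f ⊆ {j | ∃ l : ℕ, j = 2 ^ l ∨ j = -(2 ^ l)}) :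
    ∑' j, f j = ∑' l : ℕ, (f (2 ^ l) + f (-(2 ^ l))) := by
  set φ : ℕ ⊕ ℕ → ℤ := Sum.elim (fun l => 2 ^ l) fun l => -(2 ^ l)
  have hφ : Injective φ := by
    rintro (l | l) (m | m) h <;> simp only [φ, Sum.elim_inl, Sum.elim_inr, neg_inj] at h
    · rw [injective_two_pow h]
    · linarith [pow_pos (two_pos (α := ℤ)) l, pow_pos (two_pos (α := ℤ)) m]
    · linarith [pow_pos (two_pos (α := ℤ)) l, pow_pos (two_pos (α := ℤ)) m]
    · rw [injective_two_pow h]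
  have hrange : support f ⊆ Set.range φ := fun j hj => by
    obtain ⟨l, rfl | rfl⟩ := hsupp hj
    exacts [⟨.inl l, rfl⟩, ⟨.inr l, rfl⟩]
  have hfφ := hf.comp_injective hφ
  have hpos := hfφ.comp_injective Sum.inl_injective
  have hneg := hfφ.comp_injective Sum.inr_injective
  rw [← hφ.tsum_eq hrange]
  exact (Summable.tsum_sum (f := f ∘ φ) hpos hneg).trans (hpos.tsum_add hneg).symm

def secondDiff (u : ℤ → ℝ) (j : ℤ) : ℝ := u j + u (-j) - 2 * u 0

lemma Lop_eq_tsum_secondDiff {k u : ℤ → ℝ} (hsym : ∀ j, k (-j) = k j)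
    (hsupp : support k ⊆ {j | ∃ l : ℕ, j = 2 ^ l ∨ j = -(2 ^ l)})
    (hf : Summable fun j => k j * (u j - u 0)) :
    Lop k u = ∑' l : ℕ, k (2 ^ l) * secondDiff u (2 ^ l) := by
  rw [Lop, tsum_int_eq_tsum_nat_of_support_subset hf ((support_mul_subset_left _ _).trans hsupp)]
  congr 1 with l
  rw [hsym, secondDiff]
  ring_nf

lemma tsum_ofReal_comp_le_Gamma2e (k u : ℤ → ℝ) {φ : ℕ → ℤ × ℤ} (hφ : Injective φ) :
    ∑' l, ENNReal.ofReal (k (φ l).1 * k (φ l).2 *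
      (u ((φ l).1 + (φ l).2) - u (φ l).1 - u (φ l).2 + u 0) ^ 2) ≤ 4 * Gamma2e k u := by
  rw [Gamma2e, ← mul_assoc, one_div, ENNReal.mul_inv_cancel (by norm_num) (by norm_num), one_mul]
  exact ENNReal.tsum_comp_le_tsum_of_injective hφ _

section Doubling

variable {k : ℤ → ℝ} (u : ℤ → ℝ) {m : ℕ → ℤ}

lemma tsum_ofReal_sq_secondDiff_le_Gamma2e (hsym : ∀ j, k (-j) = k j) (hm : Injective m) :
    ∑' l, ENNReal.ofReal ((k (m l) * secondDiff u (m l)) ^ 2) ≤ 4 * Gamma2e k u := by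
  convert tsum_ofReal_comp_le_Gamma2e k u (φ := fun l => (m l, -m l))
    (fun l l' h => hm (congrArg Prod.fst h)) using 3 with l
  rw [hsym, add_neg_cancel, secondDiff]
  congr 1
  ring

lemma tsum_ofReal_sq_secondDiff_two_mul_le_Gamma2e (hsym : ∀ j, k (-j) = k j)
    (hm : Injective m) :
    ∑' l, ENNReal.ofReal ((k (m l) * secondDiff u (2 * m l)) ^ 2) ≤ 72 * Gamma2e k u := by
  set A := fun l => k (m l) * (u (2 * m l) - 2 * u (m l) + u 0)
  set B := fun l => k (m l) * (u (-(2 * m l)) - 2 * u (-m l) + u 0)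
  set C := fun l => k (m l) * secondDiff u (m l)
  have hA : ∑' l, ENNReal.ofReal (A l ^ 2) ≤ 4 * Gamma2e k u := by
    convert tsum_ofReal_comp_le_Gamma2e k u (φ := fun l => (m l, m l))
      (fun l l' h => hm (congrArg Prod.fst h)) using 3 with l
    simp only [A, ← two_mul]
    congr 1
    ring
  have hB : ∑' l, ENNReal.ofReal (B l ^ 2) ≤ 4 * Gamma2e k u := by
    convert tsum_ofReal_comp_le_Gamma2e k u (φ := fun l => (-m l, -m l))
      (fun l l' h => hm (neg_inj.mp (congrArg Prod.fst h))) using 3 with l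
    simp only [B, ← two_mul, hsym, mul_neg]
    congr 1
    ring
  have hC := tsum_ofReal_sq_secondDiff_le_Gamma2e u hsym hm
  have hdouble : ∀ l, ENNReal.ofReal ((k (m l) * secondDiff u (2 * m l)) ^ 2) ≤
      6 * (ENNReal.ofReal (A l ^ 2) + ENNReal.ofReal (B l ^ 2) + ENNReal.ofReal (C l ^ 2)) := by
    intro l
    -- the doubling relation: the Γ₂ terms at `(j, j)` and `(-j, -j)` plus twice that at `(j, -j)`
    have hsplit : k (m l) * secondDiff u (2 * m l) = A l + B l + 2 * C l := by
      simp only [A, B, C, secondDiff]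
      ring
    rw [hsplit, ← ENNReal.ofReal_add (sq_nonneg _) (sq_nonneg _),
      ← ENNReal.ofReal_add (by positivity) (sq_nonneg _), ← ENNReal.ofReal_ofNat,
      ← ENNReal.ofReal_mul (by norm_num)]
    exact ENNReal.ofReal_le_ofReal <| by
      nlinarith [sq_nonneg (A l - B l), sq_nonneg (2 * A l - C l), sq_nonneg (2 * B l - C l)]
  calc _ ≤ ∑' l, 6 * (ENNReal.ofReal (A l ^ 2) + ENNReal.ofReal (B l ^ 2) +
          ENNReal.ofReal (C l ^ 2)) := ENNReal.tsum_le_tsum hdouble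
    _ = 6 * (∑' l, ENNReal.ofReal (A l ^ 2) + ∑' l, ENNReal.ofReal (B l ^ 2) +
          ∑' l, ENNReal.ofReal (C l ^ 2)) := by
      rw [ENNReal.tsum_mul_left, ENNReal.tsum_add, ENNReal.tsum_add]
    _ ≤ 6 * (4 * Gamma2e k u + 4 * Gamma2e k u + 4 * Gamma2e k u) := by gcongr
    _ = 72 * Gamma2e k u := by ring

end Doubling

theorem stmt17_general (k : ℤ → ℝ) (hpos : ∀ j, 0 ≤ k j) (hsym : ∀ j, k (-j) = k j)
    (hsupp : Function.support k = {j : ℤ | ∃ l : ℕ, j = 2 ^ l ∨ j = -(2 ^ l)})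
    (hratio : Summable (fun l : ℕ => (k (2 ^ (l + 1)) / k (2 ^ l)) ^ 2)) :
    ∃ d : ℝ, 0 < d ∧ ∀ u : ℤ → ℝ, Summable (fun j : ℤ => k j * |u j - u 0|) →
      ENNReal.ofReal ((1 / d) * (Lop k u) ^ 2) ≤ Gamma2e k u := by
  set R := ∑' l : ℕ, (k (2 ^ (l + 1)) / k (2 ^ l)) ^ 2
  have hR : 0 ≤ R := tsum_nonneg fun _ => sq_nonneg _
  refine ⟨8 + 144 * R, by positivity, fun u hu => ?_⟩
  rcases eq_or_ne (Gamma2e k u) ⊤ with hΓ | hΓ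
  · exact hΓ ▸ le_top
  set t := (Gamma2e k u).toReal
  have hk : ∀ l : ℕ, k (2 ^ l) ≠ 0 := fun l => show (2 : ℤ) ^ l ∈ support k from
    hsupp ▸ ⟨l, Or.inl rfl⟩
  set x := fun l : ℕ => k (2 ^ l) * secondDiff u (2 ^ l)
  set z := fun l : ℕ => k (2 ^ l) * secondDiff u (2 * 2 ^ l)
  obtain ⟨hx, hxt⟩ := summable_and_tsum_le_toReal (fun l => sq_nonneg (x l)) (by finiteness)
    (tsum_ofReal_sq_secondDiff_le_Gamma2e u hsym injective_two_pow)
  obtain ⟨hz, hzt⟩ := summable_and_tsum_le_toReal (fun l => sq_nonneg (z l)) (by finiteness)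
    (tsum_ofReal_sq_secondDiff_two_mul_le_Gamma2e u hsym injective_two_pow)
  have hrec : ∀ l, x (l + 1) = k (2 ^ (l + 1)) / k (2 ^ l) * z l := fun l => by
    simp only [x, z]
    rw [← mul_assoc, div_mul_cancel₀ _ (hk l), pow_succ']
  have hf : Summable fun j => k j * (u j - u 0) := .of_norm <| by
    simpa only [Real.norm_eq_abs, abs_mul, abs_of_nonneg (hpos _)] using hu
  have hx0 : x 0 ^ 2 ≤ 4 * t := (hx.le_tsum 0 fun _ _ => sq_nonneg _).trans <| by simpa using hxt
  have hLop := sq_tsum_le_of_succ_eq_mul hratio hz hrec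
  rw [← Lop_eq_tsum_secondDiff hsym hsupp.le hf] at hLop
  rw [← ENNReal.ofReal_toReal hΓ, one_div_mul_eq_div]
  refine ENNReal.ofReal_le_ofReal <| (div_le_iff₀' (by positivity)).mpr ?_
  simp only [ENNReal.toReal_mul, ENNReal.toReal_ofNat] at hzt
  nlinarith [mul_le_mul_of_nonneg_left hzt hR]

theorem stmt17 (k : ℤ → ℝ) (hpos : ∀ j, 0 ≤ k j) (hsym : ∀ j, k (-j) = k j)
    (h0 : k 0 = 0) (hsum : Summable k)
    (hsupp : Function.support k = {j : ℤ | ∃ l : ℕ, j = 2 ^ l ∨ j = -(2 ^ l)})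
    (hratio : Summable (fun l : ℕ => (k (2 ^ (l + 1)) / k (2 ^ l)) ^ 2)) :
    ∃ d : ℝ, 0 < d ∧ ∀ u : ℤ → ℝ, Summable (fun j : ℤ => k j * |u j - u 0|) →
      ENNReal.ofReal ((1 / d) * (Lop k u) ^ 2) ≤ Gamma2e k u :=
  stmt17_general k hpos hsym hsupp hratio
end

section
/- Let k : ℤ → [0,∞) be symmetric, summable, k(0)=0, with support S = {±3^l : l ∈ ℕ₀} and satisfying ∑_{l∈S₊} k(3l)/k(l) < ∞ where S₊ = S ∩ ℕ. Then there exists a finite d > 0 such that Γ₂(u)(0) ≥ (1/d)·(ℒu(0))² for all admissible u, i.e. CD(0,d) holds at 0. -/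
open scoped ENNReal

/-!
Write `Δ(a, b) = u(a + b) - u(a) - u(b) + u(0)`, so that `Γ₂(u)(0) = ¼ ∑ k(a) k(b) Δ(a, b)²` and,
`k` being even and supported on `±3ˡ`, `ℒu(0) = -∑ₗ k(3ˡ) Δ(3ˡ, -3ˡ)`. The identity
`Δ(3j, -3j) = Δ(j, -j) - Δ(j, j) - Δ(-j, -j) + Δ(3j, -j) + Δ(-3j, j)`
bounds `|Δ(3ˡ⁺¹, -3ˡ⁺¹)|` by `|Δ(3ˡ, -3ˡ)|` plus terms whose `Γ₂`-weights are `k(3ˡ)²` and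
`k(3ˡ⁺¹) k(3ˡ)`. Writing `k(3ˡ⁺¹) = rₗ k(3ˡ)` and applying Cauchy–Schwarz with the weights `rₗ`,
whose sum `R` is finite, gives `ℒu(0)² ≤ 16 (1 + 2R + 3R²) Γ₂(u)(0)`.
-/

open MeasureTheory Function
open scoped NNReal

namespace ENNReal

theorem add_sq_le_two_mul (a b : ℝ≥0∞) : (a + b) ^ 2 ≤ 2 * (a ^ 2 + b ^ 2) := by
  rcases eq_or_ne a ⊤ with rfl | ha
  · simp
  rcases eq_or_ne b ⊤ with rfl | hb
  · simp
  lift a to ℝ≥0 using ha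
  lift b to ℝ≥0 using hb
  exact_mod_cast add_sq_le (a := a) (b := b)

theorem tsum_mul_sq_le_sq_mul_sq {ι : Type*} (f g : ι → ℝ≥0∞) :
    (∑' i, f i * g i) ^ 2 ≤ (∑' i, f i ^ 2) * ∑' i, g i ^ 2 := by
  let _ : MeasurableSpace ι := ⊤
  have holder := ENNReal.lintegral_mul_le_Lp_mul_Lq Measure.count Real.HolderConjugate.two_two
    (measurable_from_top (f := f)).aemeasurable (measurable_from_top (f := g)).aemeasurable
  simp only [Pi.mul_apply, lintegral_count, rpow_two, one_div] at holder
  calc (∑' i, f i * g i) ^ 2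
      ≤ ((∑' i, f i ^ 2) ^ (2⁻¹ : ℝ) * (∑' i, g i ^ 2) ^ (2⁻¹ : ℝ)) ^ (2 : ℝ) := by
        rw [← rpow_two]; gcongr
    _ = (∑' i, f i ^ 2) * ∑' i, g i ^ 2 := by
        rw [mul_rpow_of_nonneg _ _ zero_le_two, rpow_inv_rpow two_ne_zero,
          rpow_inv_rpow two_ne_zero]

theorem tsum_mul_sq_le_tsum_mul_tsum_mul_sq {ι : Type*} (w x : ι → ℝ≥0∞) :
    (∑' i, w i * x i) ^ 2 ≤ (∑' i, w i) * ∑' i, w i * x i ^ 2 := by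
  have hw : ∀ i, (w i ^ (2⁻¹ : ℝ)) ^ 2 = w i := fun i => by
    rw [← rpow_two, rpow_inv_rpow two_ne_zero]
  have := tsum_mul_sq_le_sq_mul_sq (fun i => w i ^ (2⁻¹ : ℝ)) (fun i => w i ^ (2⁻¹ : ℝ) * x i)
  simpa only [← mul_assoc, ← sq, mul_pow, hw] using this

theorem add_add_add_sq_le_four_mul (p q s t : ℝ≥0∞) :
    (p + q + s + t) ^ 2 ≤ 4 * (p ^ 2 + q ^ 2 + s ^ 2 + t ^ 2) :=
  calc (p + q + s + t) ^ 2 = ((p + q) + (s + t)) ^ 2 := by ring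
    _ ≤ 2 * ((p + q) ^ 2 + (s + t) ^ 2) := add_sq_le_two_mul _ _
    _ ≤ 2 * (2 * (p ^ 2 + q ^ 2) + 2 * (s ^ 2 + t ^ 2)) := by
        gcongr <;> exact add_sq_le_two_mul _ _
    _ = 4 * (p ^ 2 + q ^ 2 + s ^ 2 + t ^ 2) := by ring

end ENNReal

section GrowthRatio

variable {c r : ℕ → ℝ≥0∞} {R : ℝ≥0∞}

theorem sq_tsum_succ_mul_le (hc : ∀ l, c (l + 1) = r l * c l) (hr : ∑' l, r l ≤ R)
    (y : ℕ → ℝ≥0∞) :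
    (∑' l, c (l + 1) * y l) ^ 2 ≤ R * ∑' l, r l * (c l * y l) ^ 2 := by
  simp_rw [hc, mul_assoc]
  calc _ ≤ (∑' l, r l) * ∑' l, r l * (c l * y l) ^ 2 :=
        ENNReal.tsum_mul_sq_le_tsum_mul_tsum_mul_sq _ _
    _ ≤ R * ∑' l, r l * (c l * y l) ^ 2 := by gcongr

theorem sq_tsum_succ_mul_le_sq_mul (hc : ∀ l, c (l + 1) = r l * c l) (hr : ∑' l, r l ≤ R)
    (y : ℕ → ℝ≥0∞) :
    (∑' l, c (l + 1) * y l) ^ 2 ≤ R ^ 2 * ∑' l, (c l * y l) ^ 2 :=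
  calc _ ≤ R * ∑' l, r l * (c l * y l) ^ 2 := sq_tsum_succ_mul_le hc hr y
    _ ≤ R * ∑' l, R * (c l * y l) ^ 2 := by
        gcongr with l
        exact (ENNReal.le_tsum l).trans hr
    _ = R ^ 2 * ∑' l, (c l * y l) ^ 2 := by rw [ENNReal.tsum_mul_left, ← mul_assoc, sq]

theorem sq_tsum_succ_mul_le_mul (hc : ∀ l, c (l + 1) = r l * c l) (hr : ∑' l, r l ≤ R)
    (y : ℕ → ℝ≥0∞) :
    (∑' l, c (l + 1) * y l) ^ 2 ≤ R * ∑' l, c (l + 1) * c l * y l ^ 2 := by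
  convert sq_tsum_succ_mul_le hc hr y using 4 with l
  rw [hc]
  ring

theorem sq_tsum_mul_le_of_succ_le {x a b : ℕ → ℝ≥0∞} (hc : ∀ l, c (l + 1) = r l * c l)
    (hr : ∑' l, r l ≤ R) (hx : ∀ l, x (l + 1) ≤ x l + a l + b l) :
    (∑' l, c l * x l) ^ 2 ≤ 4 * ((c 0 * x 0) ^ 2 + R ^ 2 * ∑' l, (c l * x l) ^ 2
      + R ^ 2 * ∑' l, (c l * a l) ^ 2 + R * ∑' l, c (l + 1) * c l * b l ^ 2) := by
  have hsplit : ∑' l, c l * x l ≤ c 0 * x 0 + ∑' l, c (l + 1) * x l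
      + ∑' l, c (l + 1) * a l + ∑' l, c (l + 1) * b l := by
    rw [tsum_eq_zero_add' ENNReal.summable, add_assoc, add_assoc, ← ENNReal.tsum_add,
      ← ENNReal.tsum_add]
    gcongr with l
    simpa only [mul_add, add_assoc] using mul_le_mul_right (hx l) (c (l + 1))
  calc (∑' l, c l * x l) ^ 2
      ≤ (c 0 * x 0 + ∑' l, c (l + 1) * x l + ∑' l, c (l + 1) * a l
          + ∑' l, c (l + 1) * b l) ^ 2 := by gcongr
    _ ≤ 4 * ((c 0 * x 0) ^ 2 + (∑' l, c (l + 1) * x l) ^ 2 + (∑' l, c (l + 1) * a l) ^ 2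
          + (∑' l, c (l + 1) * b l) ^ 2) := ENNReal.add_add_add_sq_le_four_mul _ _ _ _
    _ ≤ _ := by
        gcongr
        · exact sq_tsum_succ_mul_le_sq_mul hc hr x
        · exact sq_tsum_succ_mul_le_sq_mul hc hr a
        · exact sq_tsum_succ_mul_le_mul hc hr b

end GrowthRatio

section SignedSequence

variable {e : ℕ → ℤ}

theorem injective_cond_neg (he : Injective e) (he_pos : ∀ l, 0 < e l) :
    Injective fun p : ℕ × Bool => cond p.2 (e p.1) (-e p.1) := by
  rintro ⟨l, _ | _⟩ ⟨m, _ | _⟩ h <;> dsimp only [cond_true, cond_false] at h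
  · rw [he (neg_inj.mp h)]
  · linarith [he_pos l, he_pos m]
  · linarith [he_pos l, he_pos m]
  · rw [he h]

theorem ENNReal.tsum_add_neg_le (he : Injective e) (he_pos : ∀ l, 0 < e l) (f : ℤ → ℝ≥0∞) :
    ∑' l, (f (e l) + f (-e l)) ≤ ∑' j, f j :=
  calc ∑' l, (f (e l) + f (-e l)) = ∑' p : ℕ × Bool, f (cond p.2 (e p.1) (-e p.1)) := by
        rw [ENNReal.tsum_prod']
        exact tsum_congr fun l => by rw [tsum_bool]; exact add_comm _ _
    _ ≤ ∑' j, f j := ENNReal.tsum_comp_le_tsum_of_injective (injective_cond_neg he he_pos) f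

theorem tsum_eq_tsum_add_neg (he : Injective e) (he_pos : ∀ l, 0 < e l) {f : ℤ → ℝ}
    (hf : Summable f) (hsupp : support f ⊆ {j | ∃ l, j = e l ∨ j = -e l}) :
    ∑' j, f j = ∑' l, (f (e l) + f (-e l)) := by
  have hE := injective_cond_neg he he_pos
  have hrange : support f ⊆ Set.range fun p : ℕ × Bool => cond p.2 (e p.1) (-e p.1) := by
    rintro j hj
    obtain ⟨l, rfl | rfl⟩ := hsupp hj
    exacts [⟨(l, true), rfl⟩, ⟨(l, false), rfl⟩]
  have hsum : Summable fun p : ℕ × Bool => f (cond p.2 (e p.1) (-e p.1)) := hf.comp_injective hE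
  rw [← hE.tsum_eq hrange, hsum.tsum_prod' fun _ => .of_finite]
  exact tsum_congr fun l => by rw [tsum_bool]; exact add_comm _ _

end SignedSequence

theorem injective_three_pow : Injective fun l : ℕ => (3 : ℤ) ^ l :=
  pow_right_injective₀ (by norm_num) (by norm_num)

def mixedDiff (u : ℤ → ℝ) (a b : ℤ) : ℝ := u (a + b) - u a - u b + u 0

theorem mixedDiff_three_mul (u : ℤ → ℝ) (j : ℤ) :
    mixedDiff u (3 * j) (-(3 * j)) = mixedDiff u j (-j) - mixedDiff u j j
      - mixedDiff u (-j) (-j) + mixedDiff u (3 * j) (-j) + mixedDiff u (3 * -j) (- -j) := by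
  simp only [mixedDiff]
  ring_nf

theorem enorm_mixedDiff_three_mul_le (u : ℤ → ℝ) (j : ℤ) :
    ‖mixedDiff u (3 * j) (-(3 * j))‖ₑ ≤ ‖mixedDiff u j (-j)‖ₑ
      + (‖mixedDiff u j j‖ₑ + ‖mixedDiff u (-j) (-j)‖ₑ)
      + (‖mixedDiff u (3 * j) (-j)‖ₑ + ‖mixedDiff u (3 * -j) (- -j)‖ₑ) := by
  rw [mixedDiff_three_mul]
  grw [enorm_add_le, enorm_add_le, enorm_sub_le, enorm_sub_le]
  exact le_of_eq (by ring)

section Gamma2Bounds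

variable (K : ℤ → ℝ≥0∞) (u : ℤ → ℝ)

noncomputable def gamma2Term (p : ℤ × ℤ) : ℝ≥0∞ := K p.1 * K p.2 * ‖mixedDiff u p.1 p.2‖ₑ ^ 2

noncomputable def gamma2Sum : ℝ≥0∞ := ∑' p, gamma2Term K u p

theorem tsum_comp_three_pow_add_neg_le {φ : ℤ → ℤ × ℤ} (hφ : Injective φ) :
    ∑' l : ℕ, (gamma2Term K u (φ (3 ^ l)) + gamma2Term K u (φ (-3 ^ l))) ≤ gamma2Sum K u :=
  (ENNReal.tsum_add_neg_le injective_three_pow (fun l => by positivity) (gamma2Term K u ∘ φ)).trans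
    (ENNReal.tsum_comp_le_tsum_of_injective hφ _)

variable {K}

theorem tsum_sq_mul_enorm_mixedDiff_neg_le (hK : ∀ j, K (-j) = K j) :
    ∑' l : ℕ, (K (3 ^ l) * ‖mixedDiff u (3 ^ l) (-3 ^ l)‖ₑ) ^ 2 ≤ gamma2Sum K u := by
  have hφ : Injective fun l : ℕ => ((3 : ℤ) ^ l, -3 ^ l) :=
    fun l m h => injective_three_pow (congrArg Prod.fst h)
  refine le_of_eq_of_le (tsum_congr fun l => ?_) (ENNReal.tsum_comp_le_tsum_of_injective hφ _)
  simp only [gamma2Term, hK, mul_pow, sq (K _)]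

theorem tsum_sq_mul_enorm_mixedDiff_self_le (hK : ∀ j, K (-j) = K j) :
    ∑' l : ℕ, (K (3 ^ l) * (‖mixedDiff u (3 ^ l) (3 ^ l)‖ₑ
      + ‖mixedDiff u (-3 ^ l) (-3 ^ l)‖ₑ)) ^ 2 ≤ 2 * gamma2Sum K u := by
  have hφ : Injective fun j : ℤ => (j, j) := fun i j h => congrArg Prod.fst h
  grw [← tsum_comp_three_pow_add_neg_le K u hφ, ← ENNReal.tsum_mul_left]
  gcongr with l
  grw [mul_pow, ENNReal.add_sq_le_two_mul]
  simp only [gamma2Term, hK]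
  exact le_of_eq (by ring)

theorem tsum_mul_mul_sq_enorm_mixedDiff_three_mul_le (hK : ∀ j, K (-j) = K j) :
    ∑' l : ℕ, K (3 ^ (l + 1)) * K (3 ^ l) * (‖mixedDiff u (3 * 3 ^ l) (-3 ^ l)‖ₑ
      + ‖mixedDiff u (3 * -3 ^ l) (- -3 ^ l)‖ₑ) ^ 2 ≤ 2 * gamma2Sum K u := by
  have hφ : Injective fun j : ℤ => (3 * j, -j) := fun i j h => neg_inj.mp (congrArg Prod.snd h)
  grw [← tsum_comp_three_pow_add_neg_le K u hφ, ← ENNReal.tsum_mul_left]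
  refine ENNReal.tsum_le_tsum fun l => ?_
  grw [ENNReal.add_sq_le_two_mul]
  simp only [gamma2Term, hK, mul_neg, neg_neg, pow_succ']
  exact le_of_eq (by ring)

end Gamma2Bounds

theorem sq_tsum_le_gamma2Sum {K : ℤ → ℝ≥0∞} (u : ℤ → ℝ) (hK : ∀ j, K (-j) = K j)
    {r : ℕ → ℝ≥0∞} {R : ℝ≥0∞} (hc : ∀ l, K (3 ^ (l + 1)) = r l * K (3 ^ l))
    (hr : ∑' l, r l ≤ R) :
    (∑' l : ℕ, K (3 ^ l) * ‖mixedDiff u (3 ^ l) (-3 ^ l)‖ₑ) ^ 2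
      ≤ 4 * (1 + 2 * R + 3 * R ^ 2) * gamma2Sum K u := by
  have hx : ∀ l : ℕ, ‖mixedDiff u (3 ^ (l + 1)) (-3 ^ (l + 1))‖ₑ
      ≤ ‖mixedDiff u (3 ^ l) (-3 ^ l)‖ₑ
        + (‖mixedDiff u (3 ^ l) (3 ^ l)‖ₑ + ‖mixedDiff u (-3 ^ l) (-3 ^ l)‖ₑ)
        + (‖mixedDiff u (3 * 3 ^ l) (-3 ^ l)‖ₑ + ‖mixedDiff u (3 * -3 ^ l) (- -3 ^ l)‖ₑ) :=
    fun l => by rw [pow_succ']; exact enorm_mixedDiff_three_mul_le u _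
  refine (sq_tsum_mul_le_of_succ_le (c := fun l => K (3 ^ l)) hc hr hx).trans ?_
  calc _ ≤ 4 * (gamma2Sum K u + R ^ 2 * gamma2Sum K u + R ^ 2 * (2 * gamma2Sum K u)
        + R * (2 * gamma2Sum K u)) := by
        gcongr
        · exact (ENNReal.le_tsum 0).trans (tsum_sq_mul_enorm_mixedDiff_neg_le u hK)
        · exact tsum_sq_mul_enorm_mixedDiff_neg_le u hK
        · exact tsum_sq_mul_enorm_mixedDiff_self_le u hK
        · exact tsum_mul_mul_sq_enorm_mixedDiff_three_mul_le u hK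
    _ = 4 * (1 + 2 * R + 3 * R ^ 2) * gamma2Sum K u := by ring

theorem Gamma2e_eq_gamma2Sum {k : ℤ → ℝ} (hpos : ∀ j, 0 ≤ k j) (u : ℤ → ℝ) :
    Gamma2e k u = 4⁻¹ * gamma2Sum (fun j => ENNReal.ofReal (k j)) u := by
  rw [Gamma2e, gamma2Sum, one_div]
  congr 1
  refine tsum_congr fun p => ?_
  rw [gamma2Term, ENNReal.ofReal_mul (mul_nonneg (hpos _) (hpos _)), ENNReal.ofReal_mul (hpos _),
    Real.enorm_eq_ofReal_abs, ← ENNReal.ofReal_pow (abs_nonneg _), sq_abs]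
  rfl

theorem enorm_Lop_le {k u : ℤ → ℝ} (hpos : ∀ j, 0 ≤ k j) (hsym : ∀ j, k (-j) = k j)
    (hsupp : support k = {j : ℤ | ∃ l : ℕ, j = 3 ^ l ∨ j = -(3 ^ l)})
    (hu : Summable fun j => k j * |u j - u 0|) :
    ‖Lop k u‖ₑ ≤ ∑' l : ℕ, ENNReal.ofReal (k (3 ^ l)) * ‖mixedDiff u (3 ^ l) (-3 ^ l)‖ₑ := by
  have hs : Summable fun j => k j * (u j - u 0) :=
    .of_norm (hu.congr fun j => by rw [Real.norm_eq_abs, abs_mul, abs_of_nonneg (hpos j)])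
  rw [Lop, tsum_eq_tsum_add_neg injective_three_pow (fun l => by positivity) hs
    (hsupp ▸ support_mul_subset_left _ _)]
  refine enorm_tsum_le_tsum_enorm.trans (le_of_eq (tsum_congr fun l => ?_))
  rw [hsym, ← mul_add, enorm_mul, Real.enorm_of_nonneg (hpos _), ← enorm_neg (mixedDiff _ _ _)]
  congr 2
  simp only [mixedDiff, add_neg_cancel]
  ring

theorem sq_enorm_Lop_le_Gamma2e {k u : ℤ → ℝ} (hpos : ∀ j, 0 ≤ k j) (hsym : ∀ j, k (-j) = k j)
    (hsupp : support k = {j : ℤ | ∃ l : ℕ, j = 3 ^ l ∨ j = -(3 ^ l)})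
    (hu : Summable fun j => k j * |u j - u 0|) {R : ℝ≥0∞}
    (hR : ∑' l : ℕ, ENNReal.ofReal (k (3 ^ (l + 1)) / k (3 ^ l)) ≤ R) :
    ‖Lop k u‖ₑ ^ 2 ≤ 16 * (1 + 2 * R + 3 * R ^ 2) * Gamma2e k u := by
  have hc (l : ℕ) : ENNReal.ofReal (k (3 ^ (l + 1)))
      = ENNReal.ofReal (k (3 ^ (l + 1)) / k (3 ^ l)) * ENNReal.ofReal (k (3 ^ l)) := by
    have hk : k (3 ^ l) ≠ 0 := show (3 : ℤ) ^ l ∈ support k from hsupp ▸ ⟨l, .inl rfl⟩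
    rw [← ENNReal.ofReal_mul (div_nonneg (hpos _) (hpos _)), div_mul_cancel₀ _ hk]
  have h16 : (16 : ℝ≥0∞) * 4⁻¹ = 4 := by
    rw [show (16 : ℝ≥0∞) = 4 * 4 by norm_num, mul_assoc,
      ENNReal.mul_inv_cancel (by norm_num) (by norm_num), mul_one]
  calc ‖Lop k u‖ₑ ^ 2
      ≤ (∑' l : ℕ, ENNReal.ofReal (k (3 ^ l)) * ‖mixedDiff u (3 ^ l) (-3 ^ l)‖ₑ) ^ 2 := by
        grw [enorm_Lop_le hpos hsym hsupp hu]
    _ ≤ 4 * (1 + 2 * R + 3 * R ^ 2) * gamma2Sum (fun j => ENNReal.ofReal (k j)) u :=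
        sq_tsum_le_gamma2Sum (K := fun j => ENNReal.ofReal (k j)) u
          (fun j => congrArg _ (hsym j)) hc hR
    _ = 16 * 4⁻¹ * (1 + 2 * R + 3 * R ^ 2) * gamma2Sum (fun j => ENNReal.ofReal (k j)) u := by
        rw [h16]
    _ = 16 * (1 + 2 * R + 3 * R ^ 2) * Gamma2e k u := by
        rw [Gamma2e_eq_gamma2Sum hpos]
        ring

theorem ENNReal.ofReal_one_div_toReal_mul_sq_le {y : ℝ} {D S : ℝ≥0∞} (hD₀ : D ≠ 0)
    (hD : D ≠ ⊤) (h : ‖y‖ₑ ^ 2 ≤ D * S) : ENNReal.ofReal ((1 / D.toReal) * y ^ 2) ≤ S := by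
  rw [ENNReal.ofReal_mul (by positivity), one_div, ENNReal.ofReal_inv_of_pos (toReal_pos hD₀ hD),
    ofReal_toReal hD, ← sq_abs, ENNReal.ofReal_pow (abs_nonneg _), ← Real.enorm_eq_ofReal_abs,
    ENNReal.inv_mul_le_iff hD₀ hD]
  exact h

theorem stmt18_general (k : ℤ → ℝ) (hpos : ∀ j, 0 ≤ k j) (hsym : ∀ j, k (-j) = k j)
    (hsupp : Function.support k = {j : ℤ | ∃ l : ℕ, j = 3 ^ l ∨ j = -(3 ^ l)})
    (hratio : Summable (fun l : ℕ => k (3 ^ (l + 1)) / k (3 ^ l))) :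
    ∃ d : ℝ, 0 < d ∧ ∀ u : ℤ → ℝ, Summable (fun j : ℤ => k j * |u j - u 0|) →
      ENNReal.ofReal ((1 / d) * (Lop k u) ^ 2) ≤ Gamma2e k u := by
  have hR : ∑' l : ℕ, ENNReal.ofReal (k (3 ^ (l + 1)) / k (3 ^ l)) ≠ ⊤ := by
    rw [← ENNReal.ofReal_tsum_of_nonneg (fun l => div_nonneg (hpos _) (hpos _)) hratio]
    exact ENNReal.ofReal_ne_top
  set R := ∑' l : ℕ, ENNReal.ofReal (k (3 ^ (l + 1)) / k (3 ^ l))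
  have hD₀ : 16 * (1 + 2 * R + 3 * R ^ 2) ≠ 0 := by positivity
  have hD : 16 * (1 + 2 * R + 3 * R ^ 2) ≠ ⊤ := by finiteness
  exact ⟨_, ENNReal.toReal_pos hD₀ hD, fun u hu => ENNReal.ofReal_one_div_toReal_mul_sq_le hD₀ hD
    (sq_enorm_Lop_le_Gamma2e hpos hsym hsupp hu le_rfl)⟩

theorem stmt18 (k : ℤ → ℝ) (hpos : ∀ j, 0 ≤ k j) (hsym : ∀ j, k (-j) = k j)
    (h0 : k 0 = 0) (hsum : Summable k)
    (hsupp : Function.support k = {j : ℤ | ∃ l : ℕ, j = 3 ^ l ∨ j = -(3 ^ l)})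
    (hratio : Summable (fun l : ℕ => k (3 ^ (l + 1)) / k (3 ^ l))) :
    ∃ d : ℝ, 0 < d ∧ ∀ u : ℤ → ℝ, Summable (fun j : ℤ => k j * |u j - u 0|) →
      ENNReal.ofReal ((1 / d) * (Lop k u) ^ 2) ≤ Gamma2e k u :=
  stmt18_general k hpos hsym hsupp hratio
end

section
/- Let k : ℤ → [0,∞) be symmetric, summable, k(0)=0, with unbounded support S, and assume: (i) there is N ∈ ℕ₀ such that for all j,l ∈ S with max(|j|,|l|) > N one has j+l ∉ S; (ii) every integer m > 2N admits at most one decomposition m = j+l with j,l ∈ S; (iii) every integer m with 1 ≤ m ≤ 2N admits at most finitely many decompositions m = j+l with j,l ∈ S. Then for every finite d > 0 there exists a finitely supported function u : ℤ → ℝ with Γ₂(u)(0) < (1/d)·(ℒu(0))²; i.e. CD(0,d) fails at 0 for all finite d. -/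
open scoped ENNReal

/-!
Pick finitely many points `F` of the support `S` of `k`, all beyond `2N` and such that no
`f ∈ F` and `s ∈ S` have a nonzero sum in `[-2N, 2N]` (condition (iii) leaves infinitely many).
Put `u = 1/k` on `F` and extend `u` additively to the sums `f + s`, `s ∈ S`, `|s| ≤ R`.
Unique decomposition (conditions (i), (ii)) makes `u(a + b) = u(a) + u(b)` for all `a, b ∈ S`,
except on the pairs `(f, -f)` and on the pairs with one entry in `F` and the other beyond `R`.
Hence `ℒu(0) = #F`, while `4 Γ₂(u)(0) ≤ 2 (#F + τ(R) ∑_{f ∈ F} 1/k(f))` with `τ(R)` the mass of `k`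
beyond `R`. Taking `R` large gives `Γ₂(u)(0) ≤ #F < #F² / d` as soon as `#F > d`.
-/

open Finset Filter Topology

lemma hasSum_ite_fst_mem {α β M : Type*} [AddCommMonoid M] [TopologicalSpace M] [ContinuousAdd M]
    [DecidableEq α] (F : Finset α) {φ : α → β → M} {c : α → M}
    (h : ∀ a ∈ F, HasSum (φ a) (c a)) :
    HasSum (fun p : α × β => if p.1 ∈ F then φ p.1 p.2 else 0) (∑ a ∈ F, c a) := by
  have hsplit : (fun p : α × β => if p.1 ∈ F then φ p.1 p.2 else 0) =
      fun p => ∑ a ∈ F, if p.1 = a then φ a p.2 else 0 := by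
    ext p
    rw [sum_ite_eq]
  rw [hsplit]
  refine hasSum_sum fun a ha => ?_
  refine (Function.Injective.hasSum_iff (Prod.mk_right_injective a) ?_).1
    (by simpa [Function.comp_def] using h a ha)
  rintro ⟨a', b⟩ hp
  rw [if_neg]
  rintro rfl
  exact hp ⟨b, rfl⟩

section

variable {k : ℤ → ℝ} {N : ℕ} {R : ℤ} {F : Finset ℤ}

def SumsLeaveSupport (k : ℤ → ℝ) (N : ℕ) : Prop :=
  ∀ j l : ℤ, k j ≠ 0 → k l ≠ 0 → (N : ℤ) < max |j| |l| → k (j + l) = 0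

def UniqueLargeSums (k : ℤ → ℝ) (N : ℕ) : Prop :=
  ∀ a b a' b' : ℤ, k a ≠ 0 → k b ≠ 0 → k a' ≠ 0 → k b' ≠ 0 →
    a + b = a' + b' → 2 * (N : ℤ) < |a + b| → (a = a' ∧ b = b') ∨ (a = b' ∧ b = a')

lemma SumsLeaveSupport.add_eq_zero (hi : SumsLeaveSupport k N) {a b : ℤ} (ha : k a ≠ 0)
    (hb : k b ≠ 0) (hab : 2 * (N : ℤ) < |a + b|) : k (a + b) = 0 := by
  refine hi a b ha hb (lt_of_not_ge fun h => ?_)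
  linarith [abs_add_le a b, le_max_left |a| |b|, le_max_right |a| |b|]

lemma SumsLeaveSupport.two_mul_eq_zero (hi : SumsLeaveSupport k N) {f : ℤ} (hf : k f ≠ 0)
    (hfN : (N : ℤ) < |f|) : k (2 * f) = 0 := by
  simpa [two_mul] using hi f f hf hf (by simpa using hfN)

lemma uniqueLargeSums_of_symm (hsym : ∀ j, k (-j) = k j)
    (hii : ∀ m : ℤ, 2 * (N : ℤ) < m →
      ∀ j l j' l' : ℤ, k j ≠ 0 → k l ≠ 0 → k j' ≠ 0 → k l' ≠ 0 →
        j + l = m → j' + l' = m → (j = j' ∧ l = l') ∨ (j = l' ∧ l = j')) :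
    UniqueLargeSums k N := by
  intro a b a' b' ha hb ha' hb' he habs
  rcases lt_or_ge (2 * (N : ℤ)) (a + b) with hm | hm
  · exact hii (a + b) hm a b a' b' ha hb ha' hb' rfl he.symm
  · have hneg := hii (-(a + b)) (by rcases abs_cases (a + b) with ⟨h, -⟩ | ⟨h, -⟩ <;> omega)
      (-a) (-b) (-a') (-b') (by rwa [hsym]) (by rwa [hsym]) (by rwa [hsym]) (by rwa [hsym])
      (by ring) (by rw [he]; ring)
    omega

def isolatedSupport (k : ℤ → ℝ) (N : ℕ) : Set ℤ :=
  {f | k f ≠ 0 ∧ 2 * (N : ℤ) < f ∧ ∀ s, k s ≠ 0 → |f + s| ≤ 2 * (N : ℤ) → s = -f}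

lemma finite_pairs_of_small_sum (hsym : ∀ j, k (-j) = k j)
    (hiii : ∀ m : ℤ, 1 ≤ m → m ≤ 2 * (N : ℤ) →
      {p : ℤ × ℤ | k p.1 ≠ 0 ∧ k p.2 ≠ 0 ∧ p.1 + p.2 = m}.Finite) :
    {p : ℤ × ℤ | k p.1 ≠ 0 ∧ k p.2 ≠ 0 ∧ p.1 + p.2 ≠ 0 ∧ |p.1 + p.2| ≤ 2 * (N : ℤ)}.Finite := by
  set D : ℤ → Set (ℤ × ℤ) := fun m => {p | k p.1 ≠ 0 ∧ k p.2 ≠ 0 ∧ p.1 + p.2 = m}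
  have hneg : ∀ m, D (-m) ⊆ (fun p => (-p.1, -p.2)) '' D m := by
    rintro m ⟨x, y⟩ ⟨hx, hy, hxy⟩
    exact ⟨(-x, -y), ⟨by rwa [hsym], by rwa [hsym], by omega⟩, by simp⟩
  have hD : ∀ m ∈ Set.Icc (-(2 * (N : ℤ))) (2 * N), (D m \ {p | p.1 + p.2 = 0}).Finite := by
    rintro m ⟨hm₁, hm₂⟩
    rcases lt_trichotomy m 0 with h | rfl | h
    · exact (((hiii (-m) (by omega) (by omega)).image _).subset
        (neg_neg m ▸ hneg (-m))).sdiff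
    · exact Set.finite_empty.subset fun p hp => hp.2 hp.1.2.2
    · exact (hiii m h hm₂).sdiff
  refine ((Set.finite_Icc _ _).biUnion hD).subset ?_
  rintro p ⟨h1, h2, h3, h4⟩
  exact Set.mem_biUnion (abs_le.1 h4) ⟨⟨h1, h2, rfl⟩, h3⟩

lemma infinite_support_gt (hsym : ∀ j, k (-j) = k j) (hinf : (Function.support k).Infinite)
    (c : ℤ) : {f | k f ≠ 0 ∧ c < f}.Infinite := by
  intro hfin
  refine hinf (((hfin.union (hfin.image Neg.neg)).union (Set.finite_Icc (-c) c)).subset ?_)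
  intro j hj
  by_cases hj1 : c < j
  · exact Or.inl (Or.inl ⟨hj, hj1⟩)
  by_cases hj2 : j < -c
  · exact Or.inl (Or.inr ⟨-j, ⟨by rwa [hsym], by omega⟩, neg_neg j⟩)
  · exact Or.inr ⟨by omega, by omega⟩

lemma isolatedSupport_infinite (hsym : ∀ j, k (-j) = k j) (hinf : (Function.support k).Infinite)
    (hiii : ∀ m : ℤ, 1 ≤ m → m ≤ 2 * (N : ℤ) →
      {p : ℤ × ℤ | k p.1 ≠ 0 ∧ k p.2 ≠ 0 ∧ p.1 + p.2 = m}.Finite) :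
    (isolatedSupport k N).Infinite := by
  refine ((infinite_support_gt hsym hinf (2 * N)).sdiff
    ((finite_pairs_of_small_sum hsym hiii).image Prod.fst)).mono ?_
  rintro f ⟨⟨hf, hfN⟩, hbad⟩
  refine ⟨hf, hfN, fun s hs hfs => by_contra fun hne => hbad ⟨(f, s), ⟨hf, hs, ?_, hfs⟩, rfl⟩⟩
  omega

open Classical in
/-- `∑ f ∈ F, occurrences k N R f m / k f` is the paper's `u`: the value `1 / k f` at `f`,
extended additively to the sums `f + s` with `s ∈ S`, `|s| ≤ R`; the last term makes `f + f` count
twice, and the guard `2N < |m|` avoids the small sums, whose decompositions are not unique. -/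
noncomputable def occurrences (k : ℤ → ℝ) (N : ℕ) (R f m : ℤ) : ℝ :=
  (if 2 * (N : ℤ) < |m| ∧ k (m - f) ≠ 0 ∧ |m - f| ≤ R then 1 else 0)
    + (if m = f then 1 else 0) + (if m = 2 * f then 1 else 0)

noncomputable def testFn (k : ℤ → ℝ) (N : ℕ) (R : ℤ) (F : Finset ℤ) (m : ℤ) : ℝ :=
  ∑ f ∈ F, (k f)⁻¹ * occurrences k N R f m

lemma occurrences_of_mem_support (hi : SumsLeaveSupport k N) {f : ℤ} (hf : k f ≠ 0)
    (hfN : (N : ℤ) < |f|) {a : ℤ} (ha : k a ≠ 0) :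
    occurrences k N R f a = if a = f then 1 else 0 := by
  have h₁ : ¬ (2 * (N : ℤ) < |a| ∧ k (a - f) ≠ 0 ∧ |a - f| ≤ R) := fun ⟨_, h, _⟩ =>
    ha (by simpa using hi f (a - f) hf h (lt_max_of_lt_left hfN))
  have h₂ : a ≠ 2 * f := by
    rintro rfl
    exact ha (hi.two_mul_eq_zero hf hfN)
  simp [occurrences, h₁, h₂]

lemma occurrences_of_abs_le {f : ℤ} (hfN : 2 * (N : ℤ) < |f|) {m : ℤ} (hm : |m| ≤ 2 * (N : ℤ)) :
    occurrences k N R f m = 0 := by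
  have h₁ : m ≠ f := by rintro rfl; omega
  have h₂ : m ≠ 2 * f := by
    rintro rfl
    rw [abs_mul, abs_two] at hm
    omega
  simp [occurrences, h₁, h₂, hm.not_gt]

lemma occurrences_add (hi : SumsLeaveSupport k N) (huniq : UniqueLargeSums k N) {f : ℤ}
    (hf : k f ≠ 0) {a b : ℤ} (ha : k a ≠ 0) (hb : k b ≠ 0) (hab : 2 * (N : ℤ) < |a + b|) :
    occurrences k N R f (a + b) =
      (if (a = f ∧ |b| ≤ R) ∨ (b = f ∧ |a| ≤ R) then 1 else 0) +
        (if a = f ∧ b = f then 1 else 0) := by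
  have h₁ : (2 * (N : ℤ) < |a + b| ∧ k (a + b - f) ≠ 0 ∧ |a + b - f| ≤ R) ↔
      (a = f ∧ |b| ≤ R) ∨ (b = f ∧ |a| ≤ R) := by
    constructor
    · rintro ⟨-, hs, hR⟩
      rcases huniq f (a + b - f) a b hf hs ha hb (by ring) (by simpa using hab) with h | h
      · exact Or.inl ⟨h.1.symm, h.2 ▸ hR⟩
      · exact Or.inr ⟨h.1.symm, h.2 ▸ hR⟩
    · rintro (⟨rfl, hbR⟩ | ⟨rfl, haR⟩)
      · exact ⟨hab, by simpa using ⟨hb, hbR⟩⟩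
      · exact ⟨hab, by simpa using ⟨ha, haR⟩⟩
  have h₂ : a + b ≠ f := fun h => hf (h ▸ hi.add_eq_zero ha hb hab)
  have h₃ : a + b = 2 * f ↔ a = f ∧ b = f := by
    constructor
    · intro h
      rcases huniq a b f f ha hb hf hf (by omega) hab with h | h <;> exact h
    · rintro ⟨rfl, rfl⟩
      ring
  simp only [occurrences, h₁, h₂, h₃, if_false, add_zero]

lemma abs_gt_of_mem_isolatedSupport {f : ℤ} (hf : f ∈ isolatedSupport k N) :
    2 * (N : ℤ) < |f| :=
  hf.2.1.trans_le (le_abs_self f)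

lemma testFn_of_mem_support (hi : SumsLeaveSupport k N) (hF : (F : Set ℤ) ⊆ isolatedSupport k N)
    {a : ℤ} (ha : k a ≠ 0) : testFn k N R F a = if a ∈ F then (k a)⁻¹ else 0 := by
  rw [testFn, sum_congr rfl fun f hf => by
    rw [occurrences_of_mem_support hi (hF hf).1
      (by linarith [abs_gt_of_mem_isolatedSupport (hF hf)]) ha, mul_ite, mul_one, mul_zero]]
  exact sum_ite_eq F a _

lemma testFn_of_abs_le (hF : (F : Set ℤ) ⊆ isolatedSupport k N) {m : ℤ}
    (hm : |m| ≤ 2 * (N : ℤ)) : testFn k N R F m = 0 :=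
  sum_eq_zero fun f hf => by
    rw [occurrences_of_abs_le (abs_gt_of_mem_isolatedSupport (hF hf)) hm, mul_zero]

lemma testFn_zero (hF : (F : Set ℤ) ⊆ isolatedSupport k N) : testFn k N R F 0 = 0 :=
  testFn_of_abs_le hF (by simp)

lemma testFn_add (hi : SumsLeaveSupport k N) (huniq : UniqueLargeSums k N)
    (hF : (F : Set ℤ) ⊆ isolatedSupport k N) {a b : ℤ} (ha : k a ≠ 0) (hb : k b ≠ 0)
    (hab : 2 * (N : ℤ) < |a + b|) (haR : a ∈ F → |b| ≤ R) (hbR : b ∈ F → |a| ≤ R) :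
    testFn k N R F (a + b) = testFn k N R F a + testFn k N R F b := by
  simp only [testFn, ← sum_add_distrib, ← mul_add]
  refine sum_congr rfl fun f hf => ?_
  have hfN : (N : ℤ) < |f| := by linarith [abs_gt_of_mem_isolatedSupport (hF hf)]
  rw [occurrences_add hi huniq (hF hf).1 ha hb hab, occurrences_of_mem_support hi (hF hf).1 hfN ha,
    occurrences_of_mem_support hi (hF hf).1 hfN hb]
  by_cases haf : a = f <;> by_cases hbf : b = f <;> subst_vars <;>
    simp_all

lemma testFn_add_eq_zero_of_lt_abs (hi : SumsLeaveSupport k N) (huniq : UniqueLargeSums k N)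
    (hF : (F : Set ℤ) ⊆ isolatedSupport k N) (hR : ∀ f ∈ F, |f| + 2 * (N : ℤ) ≤ R) {a b : ℤ}
    (ha : a ∈ F) (hb : k b ≠ 0) (hbR : R < |b|) : testFn k N R F (a + b) = 0 := by
  have hab : 2 * (N : ℤ) < |a + b| := by
    have := abs_sub_abs_le_abs_add b a
    rw [add_comm b a] at this
    linarith [hR a ha]
  refine sum_eq_zero fun f hf => ?_
  have hfR := hR f hf
  rw [occurrences_add hi huniq (hF hf).1 (hF ha).1 hb hab, if_neg, if_neg, add_zero, mul_zero]
  · rintro ⟨-, rfl⟩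
    omega
  · rintro (⟨-, h⟩ | ⟨rfl, -⟩) <;> omega

noncomputable def gamma2Summand (k u : ℤ → ℝ) (p : ℤ × ℤ) : ℝ :=
  k p.1 * k p.2 * (u (p.1 + p.2) - u p.1 - u p.2 + u 0) ^ 2

lemma gamma2_eq_tsum (k u : ℤ → ℝ) : Gamma2 k u = 1 / 4 * ∑' p, gamma2Summand k u p := rfl

lemma gamma2Summand_swap (k u : ℤ → ℝ) (p : ℤ × ℤ) :
    gamma2Summand k u p.swap = gamma2Summand k u p := by
  simp only [gamma2Summand, Prod.fst_swap, Prod.snd_swap, add_comm p.2 p.1]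
  ring

noncomputable def tailMass (k : ℤ → ℝ) (R : ℤ) : ℝ :=
  ∑' b, {b : ℤ | R < |b|}.indicator k b

/-- Bounds the defect of additivity of `testFn` at `(a, b)` with `a ∈ F`: it is `1` at `b = -a`
and `k b / k a` for `b` beyond the truncation radius. -/
noncomputable def majorant (k : ℤ → ℝ) (R : ℤ) (F : Finset ℤ) (p : ℤ × ℤ) : ℝ :=
  if p.1 ∈ F then (if p.2 = -p.1 then 1 else 0) + {b : ℤ | R < |b|}.indicator k p.2 / k p.1
  else 0

lemma majorant_nonneg (hpos : ∀ j, 0 ≤ k j) (p : ℤ × ℤ) : 0 ≤ majorant k R F p := by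
  have : 0 ≤ {b : ℤ | R < |b|}.indicator k p.2 / k p.1 :=
    div_nonneg (Set.indicator_nonneg (fun b _ => hpos b) _) (hpos _)
  unfold majorant
  split_ifs <;> linarith

lemma gamma2Summand_le_majorant (hpos : ∀ j, 0 ≤ k j) (hsym : ∀ j, k (-j) = k j)
    (hi : SumsLeaveSupport k N) (huniq : UniqueLargeSums k N)
    (hF : (F : Set ℤ) ⊆ isolatedSupport k N) (hR : ∀ f ∈ F, |f| + 2 * (N : ℤ) ≤ R) {a b : ℤ}
    (ha : a ∈ F) : gamma2Summand k (testFn k N R F) (a, b) ≤ majorant k R F (a, b) := by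
  obtain ⟨hka, haN, hisol⟩ := hF ha
  have hu0 := testFn_zero (R := R) hF
  have hua : testFn k N R F a = (k a)⁻¹ := by rw [testFn_of_mem_support hi hF hka, if_pos ha]
  have hM : majorant k R F (a, b) =
      (if b = -a then 1 else 0) + {b : ℤ | R < |b|}.indicator k b / k a := if_pos ha
  by_cases hkb : k b = 0
  · simpa [gamma2Summand, hkb] using majorant_nonneg hpos (a, b)
  have hub (hbF : b ∉ F) : testFn k N R F b = 0 := by
    rw [testFn_of_mem_support hi hF hkb, if_neg hbF]
  rcases le_or_gt |a + b| (2 * (N : ℤ)) with hsmall | hlarge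
  · obtain rfl : b = -a := hisol b hkb hsmall
    have hnF : -a ∉ F := fun h => by linarith [(hF h).2.1, haN]
    have hind : 0 ≤ {b : ℤ | R < |b|}.indicator k (-a) / k a :=
      div_nonneg (Set.indicator_nonneg (fun b _ => hpos b) _) (hpos _)
    have hval : gamma2Summand k (testFn k N R F) (a, -a) = 1 := by
      simp only [gamma2Summand, add_neg_cancel, hu0, hua, hub hnF, hsym]
      field_simp
      ring
    rw [hM, if_pos rfl, hval]
    linarith
  by_cases hbR : R < |b|
  · have hbF : b ∉ F := fun h => by linarith [hR b h, abs_nonneg a]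
    have hbneg : b ≠ -a := by rintro rfl; linarith [hR a ha, abs_neg a]
    have hval : gamma2Summand k (testFn k N R F) (a, b) = k b / k a := by
      simp only [gamma2Summand, testFn_add_eq_zero_of_lt_abs hi huniq hF hR ha hkb hbR, hu0, hua,
        hub hbF]
      field_simp
      ring
    rw [hM, if_neg hbneg, Set.indicator_of_mem (by exact hbR), hval, zero_add]
  · rw [gamma2Summand, testFn_add hi huniq hF hka hkb hlarge (fun _ => not_lt.1 hbR)
      (fun _ => by linarith [hR a ha]), hu0]
    simpa using majorant_nonneg hpos (a, b)

lemma gamma2Summand_eq_zero (hi : SumsLeaveSupport k N) (huniq : UniqueLargeSums k N)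
    (hF : (F : Set ℤ) ⊆ isolatedSupport k N) {a b : ℤ} (ha : a ∉ F) (hb : b ∉ F) :
    gamma2Summand k (testFn k N R F) (a, b) = 0 := by
  by_cases hka : k a = 0
  · simp [gamma2Summand, hka]
  by_cases hkb : k b = 0
  · simp [gamma2Summand, hkb]
  have hua : testFn k N R F a = 0 := by rw [testFn_of_mem_support hi hF hka, if_neg ha]
  have hub : testFn k N R F b = 0 := by rw [testFn_of_mem_support hi hF hkb, if_neg hb]
  have huab : testFn k N R F (a + b) = 0 := by
    rcases le_or_gt |a + b| (2 * (N : ℤ)) with hsmall | hlarge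
    · exact testFn_of_abs_le hF hsmall
    · rw [testFn_add hi huniq hF hka hkb hlarge (absurd · ha) (absurd · hb), hua, hub, add_zero]
  simp [gamma2Summand, hua, hub, huab, testFn_zero hF]

lemma gamma2Summand_le_majorant_add_swap (hpos : ∀ j, 0 ≤ k j) (hsym : ∀ j, k (-j) = k j)
    (hi : SumsLeaveSupport k N) (huniq : UniqueLargeSums k N)
    (hF : (F : Set ℤ) ⊆ isolatedSupport k N) (hR : ∀ f ∈ F, |f| + 2 * (N : ℤ) ≤ R)
    (p : ℤ × ℤ) :
    gamma2Summand k (testFn k N R F) p ≤ majorant k R F p + majorant k R F p.swap := by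
  obtain ⟨a, b⟩ := p
  rw [Prod.swap_prod_mk]
  have h₁ := majorant_nonneg (R := R) (F := F) hpos (a, b)
  have h₂ := majorant_nonneg (R := R) (F := F) hpos (b, a)
  by_cases ha : a ∈ F
  · linarith [gamma2Summand_le_majorant hpos hsym hi huniq hF hR (b := b) ha]
  by_cases hb : b ∈ F
  · rw [← gamma2Summand_swap, Prod.swap_prod_mk]
    linarith [gamma2Summand_le_majorant hpos hsym hi huniq hF hR (b := a) hb]
  · rw [gamma2Summand_eq_zero hi huniq hF ha hb]
    linarith

lemma hasSum_majorant (hsum : Summable k) :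
    HasSum (majorant k R F) (#F + tailMass k R * ∑ f ∈ F, (k f)⁻¹) := by
  have h : HasSum (majorant k R F) (∑ a ∈ F, (1 + tailMass k R / k a)) :=
    hasSum_ite_fst_mem F
      (φ := fun a b => (if b = -a then 1 else 0) + {b : ℤ | R < |b|}.indicator k b / k a)
      fun a _ => (hasSum_ite_eq (-a) 1).add ((hsum.indicator _).hasSum.div_const (k a))
  convert h using 1
  simp [sum_add_distrib, mul_sum, div_eq_mul_inv]

lemma gamma2_testFn_le (hpos : ∀ j, 0 ≤ k j) (hsym : ∀ j, k (-j) = k j) (hsum : Summable k)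
    (hi : SumsLeaveSupport k N) (huniq : UniqueLargeSums k N)
    (hF : (F : Set ℤ) ⊆ isolatedSupport k N) (hR : ∀ f ∈ F, |f| + 2 * (N : ℤ) ≤ R) :
    Gamma2 k (testFn k N R F) ≤ (#F + tailMass k R * ∑ f ∈ F, (k f)⁻¹) / 2 := by
  have hM := hasSum_majorant (R := R) (F := F) hsum
  have hMM := hM.add ((Equiv.prodComm ℤ ℤ).hasSum_iff.2 hM)
  have hle := gamma2Summand_le_majorant_add_swap hpos hsym hi huniq hF hR
  have hg : Summable (gamma2Summand k (testFn k N R F)) :=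
    hMM.summable.of_nonneg_of_le
      (fun _ => mul_nonneg (mul_nonneg (hpos _) (hpos _)) (sq_nonneg _)) hle
  rw [gamma2_eq_tsum]
  linarith [hasSum_le hle hg.hasSum hMM]

lemma lop_testFn (hi : SumsLeaveSupport k N) (hF : (F : Set ℤ) ⊆ isolatedSupport k N) :
    Lop k (testFn k N R F) = #F := by
  have hterm : ∀ j, k j * (testFn k N R F j - testFn k N R F 0) = if j ∈ F then 1 else 0 := by
    intro j
    rw [testFn_zero hF, sub_zero]
    by_cases hj : k j = 0
    · rw [hj, zero_mul, if_neg (show j ∉ F from fun h => (hF h).1 hj)]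
    · rw [testFn_of_mem_support hi hF hj]
      split_ifs
      exacts [mul_inv_cancel₀ hj, mul_zero _]
  rw [Lop, tsum_congr hterm, tsum_eq_sum (s := F) fun j hj => if_neg hj]
  simp

lemma testFn_support_finite : (Function.support (testFn k N R F)).Finite := by
  refine (F.finite_toSet.biUnion fun f _ =>
    ((Set.finite_Icc (f - R) (f + R)).union (Set.toFinite {f, 2 * f})).subset ?_).subset
      (support_sum F _)
  intro m hm
  contrapose! hm
  simp only [Set.mem_union, Set.mem_Icc, Set.mem_insert_iff, Set.mem_singleton_iff, not_or,
    not_and_or, not_le] at hm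
  simp only [Function.mem_support, ne_eq, not_not, occurrences]
  rw [if_neg, if_neg hm.2.1, if_neg hm.2.2]
  · ring
  · rintro ⟨-, -, h⟩
    rw [abs_le] at h
    omega

lemma tendsto_tailMass (hsum : Summable k) : Tendsto (tailMass k) atTop (𝓝 0) := by
  have h := tendsto_tsum_of_dominated_convergence (𝓕 := atTop)
    (f := fun R b => {b : ℤ | R < |b|}.indicator k b) (g := fun _ => 0) hsum.abs
    (fun b => tendsto_const_nhds.congr' ?_)
    (Eventually.of_forall fun R b => norm_indicator_le_norm_self k b)
  · rw [tsum_zero] at h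
    exact h
  · filter_upwards [eventually_ge_atTop |b|] with R hR
    exact (Set.indicator_of_notMem (s := {b : ℤ | R < |b|}) (not_lt.2 hR) k).symm

end

theorem stmt19_general (k : ℤ → ℝ) (hpos : ∀ j, 0 ≤ k j) (hsym : ∀ j, k (-j) = k j)
    (hsum : Summable k)
    (hinf : (Function.support k).Infinite) (N : ℕ)
    (hi : ∀ j l : ℤ, k j ≠ 0 → k l ≠ 0 → (N : ℤ) < max |j| |l| → k (j + l) = 0)
    (hii : ∀ m : ℤ, 2 * (N : ℤ) < m →
      ∀ j l j' l' : ℤ, k j ≠ 0 → k l ≠ 0 → k j' ≠ 0 → k l' ≠ 0 →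
        j + l = m → j' + l' = m → (j = j' ∧ l = l') ∨ (j = l' ∧ l = j'))
    (hiii : ∀ m : ℤ, 1 ≤ m → m ≤ 2 * (N : ℤ) →
      {p : ℤ × ℤ | k p.1 ≠ 0 ∧ k p.2 ≠ 0 ∧ p.1 + p.2 = m}.Finite) :
    ∀ d : ℝ, 0 < d → ∃ u : ℤ → ℝ,
      (Function.support u).Finite ∧ u 0 = 0 ∧
      Gamma2 k u < (1 / d) * (Lop k u) ^ 2 := by
  intro d hd
  have huniq := uniqueLargeSums_of_symm hsym hii
  obtain ⟨F, hF, hFcard⟩ :=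
    (isolatedSupport_infinite hsym hinf hiii).exists_subset_card_eq (⌈d⌉₊ + 1)
  obtain ⟨R, hR₀, hR⟩ := ((eventually_ge_atTop (∑ f ∈ F, |f| + 2 * (N : ℤ))).and
    (((tendsto_tailMass hsum).mul_const (∑ f ∈ F, (k f)⁻¹)).eventually_lt_const
      (by simp : (0 : ℝ) * _ < 1))).exists
  have hRF : ∀ f ∈ F, |f| + 2 * (N : ℤ) ≤ R := fun f hf => by
    linarith [single_le_sum (fun i _ => abs_nonneg i) hf]
  refine ⟨testFn k N R F, testFn_support_finite, testFn_zero hF, ?_⟩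
  have hΓ := gamma2_testFn_le hpos hsym hsum hi huniq hF hRF
  have hn : d < #F := by
    rw [hFcard]
    push_cast
    linarith [Nat.le_ceil d]
  have h1 : (1 : ℝ) ≤ #F := Nat.one_le_cast.2 (by omega)
  rw [lop_testFn hi hF]
  calc Gamma2 k (testFn k N R F) ≤ #F := by linarith
    _ < 1 / d * (#F : ℝ) ^ 2 := by
      rw [one_div, inv_mul_eq_div, lt_div_iff₀ hd]
      nlinarith

theorem stmt19 (k : ℤ → ℝ) (hpos : ∀ j, 0 ≤ k j) (hsym : ∀ j, k (-j) = k j)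
    (h0 : k 0 = 0) (hsum : Summable k)
    (hinf : (Function.support k).Infinite) (N : ℕ)
    (hi : ∀ j l : ℤ, k j ≠ 0 → k l ≠ 0 → (N : ℤ) < max |j| |l| → k (j + l) = 0)
    (hii : ∀ m : ℤ, 2 * (N : ℤ) < m →
      ∀ j l j' l' : ℤ, k j ≠ 0 → k l ≠ 0 → k j' ≠ 0 → k l' ≠ 0 →
        j + l = m → j' + l' = m → (j = j' ∧ l = l') ∨ (j = l' ∧ l = j'))
    (hiii : ∀ m : ℤ, 1 ≤ m → m ≤ 2 * (N : ℤ) →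
      {p : ℤ × ℤ | k p.1 ≠ 0 ∧ k p.2 ≠ 0 ∧ p.1 + p.2 = m}.Finite) :
    ∀ d : ℝ, 0 < d → ∃ u : ℤ → ℝ,
      (Function.support u).Finite ∧ u 0 = 0 ∧
      Gamma2 k u < (1 / d) * (Lop k u) ^ 2 :=
  stmt19_general k hpos hsym hsum hinf N hi hii hiii
end
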